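/- arXiv:2508.12525 — 7 statements merged into one kernel-verified Lean document; each statement's English description precedes it below -/
import Mathlib

section
/- Let Ω ⊆ ℝ²_{≥0} be a moment domain, and let ε > 0 and ν > 0. Then there exist real numbers a > 0 and b > 0 and a C^∞ function h : ℝ → ℝ such that: h(0) = b and h(a) = 0; h is strictly decreasing on [0,a]; h is strictly concave on [0,a]; the derivatives satisfy −ν < h'(0) < 0 and h'(a) < −1/ν; both h'(0) and h'(a) are irrational; and the Hausdorff distance between Ω and the region Ω^{FR} := {(x,y) ∈ ℝ² : 0 ≤ x ≤ a and 0 ≤ y ≤ h(x)} is at most ε. -/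
open scoped BigOperators

/-- The "dual norm" `‖v‖_Ω^* = max_{w ∈ Ω} ⟨v,w⟩` of a vector `v ∈ ℝ²`
with respect to a (nonempty compact) set `Ω ⊆ ℝ²`. -/
noncomputable def dualNorm (Ω : Set (ℝ × ℝ)) (v : ℝ × ℝ) : ℝ :=
  sSup ((fun w : ℝ × ℝ => v.1 * w.1 + v.2 * w.2) '' Ω)

/-- The dual norm of a pair of nonnegative integers. -/
noncomputable def pairNorm (Ω : Set (ℝ × ℝ)) (p : ℕ × ℕ) : ℝ :=
  dualNorm Ω ((p.1 : ℝ), (p.2 : ℝ))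

/-- Total dual norm of a finite multiset of pairs. -/
noncomputable def totalNorm (Ω : Set (ℝ × ℝ)) (P : Multiset (ℕ × ℕ)) : ℝ :=
  (P.map (pairNorm Ω)).sum

/-- `(k,ℓ)`-admissibility of a finite multiset of pairs in `ℤ_{≥0}² \ {(0,0)}`:
the index condition `Σ (i+j) + q − 1 = k` (written additively), weak permissibility,
and length at most `ℓ ∈ ℕ∞`. -/
def Admissible (k : ℕ) (ℓ : ℕ∞) (P : Multiset (ℕ × ℕ)) : Prop :=
  (∀ p ∈ P, p ≠ (0, 0)) ∧
  (P.map (fun p => p.1 + p.2)).sum + Multiset.card P = k + 1 ∧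
  (2 ≤ Multiset.card P → (∃ p ∈ P, p.1 ≠ 0) ∧ (∃ p ∈ P, p.2 ≠ 0)) ∧
  (Multiset.card P : ℕ∞) ≤ ℓ

/-- `(≥k,ℓ)`-admissibility: same as `(k,ℓ)`-admissibility with the index condition
relaxed to `Σ (i+j) + q − 1 ≥ k`. -/
def GeAdmissible (k : ℕ) (ℓ : ℕ∞) (P : Multiset (ℕ × ℕ)) : Prop :=
  (∀ p ∈ P, p ≠ (0, 0)) ∧
  k + 1 ≤ (P.map (fun p => p.1 + p.2)).sum + Multiset.card P ∧
  (2 ≤ Multiset.card P → (∃ p ∈ P, p.1 ≠ 0) ∧ (∃ p ∈ P, p.2 ≠ 0)) ∧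
  (Multiset.card P : ℕ∞) ≤ ℓ

/-- The combinatorial capacity `G_k^ℓ(Ω) = min_{P ∈ 𝒫_{k,ℓ}} Σ_{(i,j)∈P} ‖(i,j)‖_Ω^*`. -/
noncomputable def Gcap (Ω : Set (ℝ × ℝ)) (k : ℕ) (ℓ : ℕ∞) : ℝ :=
  sInf (totalNorm Ω '' {P | Admissible k ℓ P})

/-- A moment domain: a nonempty compact convex subset of the first quadrant of `ℝ²`
which is closed under coordinatewise decrease (the moment image of a 4-dimensional
convex toric domain). -/
def MomentDomain (Ω : Set (ℝ × ℝ)) : Prop :=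
  Ω.Nonempty ∧ IsCompact Ω ∧ Convex ℝ Ω ∧
  (∀ p ∈ Ω, 0 ≤ p.1 ∧ 0 ≤ p.2) ∧
  (∀ p ∈ Ω, ∀ q : ℝ × ℝ, 0 ≤ q.1 → q.1 ≤ p.1 → 0 ≤ q.2 → q.2 ≤ p.2 → q ∈ Ω)

/-- A long domain: a compact convex subset of the first quadrant containing the unit
square `[0,1] × [0,1]` and with maximal `y`-coordinate equal to `1`. -/
def LongDomain (Ω : Set (ℝ × ℝ)) : Prop :=
  IsCompact Ω ∧ Convex ℝ Ω ∧
  (∀ p ∈ Ω, 0 ≤ p.1 ∧ 0 ≤ p.2) ∧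
  Set.Icc ((0 : ℝ), (0 : ℝ)) (1, 1) ⊆ Ω ∧
  (∀ p ∈ Ω, p.2 ≤ 1)

namespace Stmt11


noncomputable def Ef (t : ℝ) (m c' : ℕ → ℝ) (x : ℝ) (i : ℕ) : ℝ :=
  Real.exp ((m i * x - c' i) / t)

noncomputable def Sf (n : ℕ) (t : ℝ) (m c' : ℕ → ℝ) (k : ℕ) (x : ℝ) : ℝ :=
  ∑ i ∈ Finset.range n, (m i) ^ k * Ef t m c' x i

noncomputable def lse (n : ℕ) (t : ℝ) (m c' : ℕ → ℝ) (x : ℝ) : ℝ :=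
  - t * Real.log (Sf n t m c' 0 x)

section LSE

variable {n : ℕ} {t : ℝ} {m c' : ℕ → ℝ} {x v : ℝ} {i : ℕ}

lemma Ef_pos : 0 < Ef t m c' x i := Real.exp_pos _

lemma Sf0_pos (hn : 0 < n) : 0 < Sf n t m c' 0 x := by
  apply Finset.sum_pos (fun i _ => by simpa using (Ef_pos (t := t) (m := m) (c' := c') (x := x) (i := i)))
  exact Finset.nonempty_range_iff.mpr hn.ne'

lemma Sf_nonneg (hm : ∀ i < n, 0 ≤ m i) (k : ℕ) : 0 ≤ Sf n t m c' k x :=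
  Finset.sum_nonneg fun i hi => mul_nonneg (pow_nonneg (hm i (Finset.mem_range.mp hi)) _) (Ef_pos).le

lemma hasDerivAt_Ef (ht : t ≠ 0) (i : ℕ) :
    HasDerivAt (fun x => Ef t m c' x i) (Ef t m c' x i * (m i / t)) x := by
  have h1 : HasDerivAt (fun x : ℝ => (m i * x - c' i) / t) (m i / t) x := by
    simpa using (((hasDerivAt_id x).const_mul (m i)).sub_const (c' i)).div_const t
  simpa [Ef] using h1.exp

lemma hasDerivAt_Sf (ht : t ≠ 0) (k : ℕ) :
    HasDerivAt (fun x => Sf n t m c' k x) (Sf n t m c' (k+1) x / t) x := by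
  have h : HasDerivAt (fun x => Sf n t m c' k x)
      (∑ i ∈ Finset.range n, (m i) ^ k * (Ef t m c' x i * (m i / t))) x :=
    HasDerivAt.fun_sum fun i _ => (hasDerivAt_Ef ht i).const_mul _
  convert h using 1
  rw [Sf, Finset.sum_div]
  exact Finset.sum_congr rfl fun i _ => by ring

lemma contDiff_Sf (k : ℕ) : ContDiff ℝ (⊤ : ℕ∞) (fun x => Sf n t m c' k x) := by
  apply ContDiff.sum
  intro i _
  exact contDiff_const.mul (Real.contDiff_exp.comp
    (((contDiff_const.mul contDiff_id).sub contDiff_const).div_const t))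

lemma contDiff_lse (hn : 0 < n) : ContDiff ℝ (⊤ : ℕ∞) (lse n t m c') := by
  apply ContDiff.mul contDiff_const
  rw [contDiff_iff_contDiffAt]
  intro x
  exact (Real.contDiffAt_log.mpr (Sf0_pos hn).ne').comp x (contDiff_Sf 0).contDiffAt

lemma hasDerivAt_lse (hn : 0 < n) (ht : 0 < t) :
    HasDerivAt (lse n t m c') (-(Sf n t m c' 1 x / Sf n t m c' 0 x)) x := by
  have h1 : HasDerivAt (fun x => Real.log (Sf n t m c' 0 x))
      (Sf n t m c' 1 x / t / Sf n t m c' 0 x) x :=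
    (hasDerivAt_Sf ht.ne' 0).log (Sf0_pos hn).ne'
  have h2 := h1.const_mul (-t)
  refine h2.congr_deriv (Eq.symm ?_)
  field_simp

lemma hasDerivAt_ratio (hn : 0 < n) (ht : 0 < t) :
    HasDerivAt (fun x => -(Sf n t m c' 1 x / Sf n t m c' 0 x))
      (-((Sf n t m c' 2 x * Sf n t m c' 0 x - (Sf n t m c' 1 x)^2) / (t * (Sf n t m c' 0 x)^2))) x := by
  have h := ((hasDerivAt_Sf (n := n) (t := t) (m := m) (c' := c') (x := x) ht.ne' 1).div
    (hasDerivAt_Sf (n := n) (t := t) (m := m) (c' := c') (x := x) ht.ne' 0)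
    (Sf0_pos (x := x) hn).ne').neg
  refine h.congr_deriv (Eq.symm ?_)
  have h0 : Sf n t m c' 0 x ≠ 0 := (Sf0_pos hn).ne'
  field_simp

/-- Strict Cauchy–Schwarz numerator positivity. -/
lemma ratio_num_pos (hn : 2 ≤ n) (hm01 : m 0 ≠ m 1) :
    0 < Sf n t m c' 2 x * Sf n t m c' 0 x - (Sf n t m c' 1 x)^2 := by
  classical
  set E := Ef t m c' x with hE
  have hA : Sf n t m c' 2 x * Sf n t m c' 0 x
      = ∑ i ∈ Finset.range n, ∑ j ∈ Finset.range n, (m i)^2 * (E i * E j) := by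
    rw [Sf, Sf, Finset.sum_mul_sum]
    exact Finset.sum_congr rfl fun i _ => Finset.sum_congr rfl fun j _ => by ring
  have hC : Sf n t m c' 2 x * Sf n t m c' 0 x
      = ∑ i ∈ Finset.range n, ∑ j ∈ Finset.range n, (m j)^2 * (E i * E j) := by
    rw [hA, Finset.sum_comm]
    exact Finset.sum_congr rfl fun i _ => Finset.sum_congr rfl fun j _ => by ring
  have hB : (Sf n t m c' 1 x)^2
      = ∑ i ∈ Finset.range n, ∑ j ∈ Finset.range n, (m i * m j) * (E i * E j) := by
    rw [sq, Sf, Finset.sum_mul_sum]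
    exact Finset.sum_congr rfl fun i _ => Finset.sum_congr rfl fun j _ => by ring
  have hkey : Sf n t m c' 2 x * Sf n t m c' 0 x - (Sf n t m c' 1 x)^2
      = (∑ i ∈ Finset.range n, ∑ j ∈ Finset.range n, (m i - m j)^2 * (E i * E j)) / 2 := by
    have hexp : (∑ i ∈ Finset.range n, ∑ j ∈ Finset.range n, (m i - m j)^2 * (E i * E j))
        = (∑ i ∈ Finset.range n, ∑ j ∈ Finset.range n, (m i)^2 * (E i * E j))
          + (∑ i ∈ Finset.range n, ∑ j ∈ Finset.range n, (m j)^2 * (E i * E j))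
          - 2 * (∑ i ∈ Finset.range n, ∑ j ∈ Finset.range n, (m i * m j) * (E i * E j)) := by
      rw [Finset.mul_sum, ← Finset.sum_add_distrib, ← Finset.sum_sub_distrib]
      refine Finset.sum_congr rfl fun i _ => ?_
      rw [Finset.mul_sum, ← Finset.sum_add_distrib, ← Finset.sum_sub_distrib]
      exact Finset.sum_congr rfl fun j _ => by ring
    rw [hexp, ← hA, ← hC, ← hB]
    ring
  rw [hkey]
  apply div_pos _ two_pos
  apply Finset.sum_pos'
  · intro i _
    exact Finset.sum_nonneg fun j _ => mul_nonneg (sq_nonneg _) (mul_pos Ef_pos Ef_pos).le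
  · refine ⟨0, Finset.mem_range.mpr (by omega), ?_⟩
    apply Finset.sum_pos'
    · intro j _
      exact mul_nonneg (sq_nonneg _) (mul_pos Ef_pos Ef_pos).le
    · refine ⟨1, Finset.mem_range.mpr (by omega), ?_⟩
      apply mul_pos _ (mul_pos Ef_pos Ef_pos)
      exact pow_pos (abs_pos.mpr (sub_ne_zero.mpr hm01)) 2 |>.trans_eq (by rw [sq_abs])

end LSE
end Stmt11

namespace Stmt11
section LSE2
variable {n : ℕ} {t : ℝ} {m c' : ℕ → ℝ} {x v : ℝ} {i i₀ : ℕ}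

lemma Ef_le_Sf0 (hi : i < n) : Ef t m c' x i ≤ Sf n t m c' 0 x := by
  have := Finset.single_le_sum (f := fun j => (m j)^0 * Ef t m c' x j)
    (fun j _ => by simp only [pow_zero, one_mul]; exact Ef_pos.le) (Finset.mem_range.mpr hi)
  simpa [Sf] using this

lemma lse_le (hn : 0 < n) (ht : 0 < t) (hi : i < n) :
    lse n t m c' x ≤ c' i - m i * x := by
  have h1 : (m i * x - c' i) / t ≤ Real.log (Sf n t m c' 0 x) :=
    (Real.le_log_iff_exp_le (Sf0_pos hn)).mpr (Ef_le_Sf0 hi)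
  have h2 := mul_le_mul_of_nonneg_left h1 ht.le
  rw [mul_div_cancel₀ _ ht.ne'] at h2
  rw [lse]
  linarith

lemma le_lse (hn : 0 < n) (ht : 0 < t) (hv : ∀ i < n, v ≤ c' i - m i * x) :
    v - t * Real.log n ≤ lse n t m c' x := by
  have hS : Sf n t m c' 0 x ≤ (n : ℝ) * Real.exp (-v / t) := by
    have : ∀ j ∈ Finset.range n, (m j)^0 * Ef t m c' x j ≤ Real.exp (-v / t) := by
      intro j hj
      rw [pow_zero, one_mul, Ef]
      apply Real.exp_le_exp.mpr
      have := hv j (Finset.mem_range.mp hj)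
      gcongr
      · linarith
    calc Sf n t m c' 0 x ≤ ∑ _j ∈ Finset.range n, Real.exp (-v/t) :=
          Finset.sum_le_sum this
      _ = (n : ℝ) * Real.exp (-v/t) := by
          rw [Finset.sum_const, Finset.card_range, nsmul_eq_mul]
  have hlog : Real.log (Sf n t m c' 0 x) ≤ Real.log n + (-v / t) := by
    calc Real.log (Sf n t m c' 0 x) ≤ Real.log ((n : ℝ) * Real.exp (-v/t)) :=
          Real.log_le_log (Sf0_pos hn) hS
      _ = Real.log n + (-v/t) := by
          rw [Real.log_mul (Nat.cast_ne_zero.mpr hn.ne') (Real.exp_ne_zero _), Real.log_exp]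
  have h2 := mul_le_mul_of_nonneg_left hlog ht.le
  rw [mul_add, mul_div_cancel₀ _ ht.ne'] at h2
  rw [lse]
  linarith

lemma mu_le_ratio (hn : 0 < n) {μ : ℝ} (hμ : 0 ≤ μ) (hm : ∀ i < n, μ ≤ m i) :
    μ ≤ Sf n t m c' 1 x / Sf n t m c' 0 x := by
  rw [le_div_iff₀ (Sf0_pos hn)]
  rw [Sf, Sf, Finset.mul_sum]
  apply Finset.sum_le_sum
  intro i hi
  have := hm i (Finset.mem_range.mp hi)
  have := Ef_pos (t := t) (m := m) (c' := c') (x := x) (i := i)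
  nlinarith

lemma Ef_le_of_gap (ht : 0 < t) {g : ℝ}
    (hgap : c' i₀ - m i₀ * x + g ≤ c' i - m i * x) :
    Ef t m c' x i ≤ Real.exp (-g / t) * Ef t m c' x i₀ := by
  rw [Ef, Ef, ← Real.exp_add]
  apply Real.exp_le_exp.mpr
  rw [← add_div]
  gcongr
  · linarith

/-- Upper bound on the slope ratio when line `i₀` dominates with gap `g`. -/
lemma ratio_le_anchor (hn : 0 < n) (ht : 0 < t) {g Mb : ℝ} (hi₀ : i₀ < n)
    (hm0 : ∀ i < n, 0 ≤ m i) (hmM : ∀ i < n, m i ≤ Mb)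
    (hgap : ∀ i < n, i ≠ i₀ → c' i₀ - m i₀ * x + g ≤ c' i - m i * x) :
    Sf n t m c' 1 x / Sf n t m c' 0 x ≤ m i₀ + Mb * n * Real.exp (-g / t) := by
  have hMb : 0 ≤ Mb := le_trans (hm0 i₀ hi₀) (hmM i₀ hi₀)
  have hS0 := Sf0_pos (n := n) (t := t) (m := m) (c' := c') (x := x) hn
  rw [div_le_iff₀ hS0]
  have hEi₀S : Ef t m c' x i₀ ≤ Sf n t m c' 0 x := Ef_le_Sf0 hi₀
  have hrest : ∑ i ∈ (Finset.range n).erase i₀, (m i)^1 * Ef t m c' x i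
      ≤ Mb * ((n : ℝ) * Real.exp (-g/t)) * Sf n t m c' 0 x := by
    have hterm : ∀ i ∈ (Finset.range n).erase i₀,
        (m i)^1 * Ef t m c' x i ≤ Mb * (Real.exp (-g/t) * Ef t m c' x i₀) := by
      intro i hi
      obtain ⟨hne, hilt⟩ := Finset.mem_erase.mp hi
      have h1 := Ef_le_of_gap (i := i) (i₀ := i₀) (m := m) (c' := c') (x := x) ht
        (hgap i (Finset.mem_range.mp hilt) hne)
      have h2 := hm0 i (Finset.mem_range.mp hilt)
      have h3 := hmM i (Finset.mem_range.mp hilt)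
      have h4 := Ef_pos (t := t) (m := m) (c' := c') (x := x) (i := i)
      rw [pow_one]
      nlinarith
    calc ∑ i ∈ (Finset.range n).erase i₀, (m i)^1 * Ef t m c' x i
        ≤ ∑ _i ∈ (Finset.range n).erase i₀, Mb * (Real.exp (-g/t) * Ef t m c' x i₀) :=
          Finset.sum_le_sum hterm
      _ = ((Finset.range n).erase i₀).card * (Mb * (Real.exp (-g/t) * Ef t m c' x i₀)) := by
          rw [Finset.sum_const, nsmul_eq_mul]
      _ ≤ (n : ℝ) * (Mb * (Real.exp (-g/t) * Ef t m c' x i₀)) := by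
          apply mul_le_mul_of_nonneg_right _
            (mul_nonneg hMb (mul_nonneg (Real.exp_nonneg _) Ef_pos.le))
          exact Nat.cast_le.mpr ((Finset.card_erase_le).trans (le_of_eq (Finset.card_range n)))
      _ ≤ (n : ℝ) * (Mb * (Real.exp (-g/t) * Sf n t m c' 0 x)) := by
          apply mul_le_mul_of_nonneg_left _ (by positivity)
          apply mul_le_mul_of_nonneg_left _ hMb
          exact mul_le_mul_of_nonneg_left hEi₀S (by positivity)
      _ = Mb * ((n : ℝ) * Real.exp (-g/t)) * Sf n t m c' 0 x := by ring
  have hsplit : Sf n t m c' 1 x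
      = (m i₀)^1 * Ef t m c' x i₀ + ∑ i ∈ (Finset.range n).erase i₀, (m i)^1 * Ef t m c' x i := by
    rw [Sf, ← Finset.add_sum_erase _ _ (Finset.mem_range.mpr hi₀)]
  have hi₀nonneg := hm0 i₀ hi₀
  have h5 : (m i₀)^1 * Ef t m c' x i₀ ≤ m i₀ * Sf n t m c' 0 x := by
    rw [pow_one]; exact mul_le_mul_of_nonneg_left hEi₀S hi₀nonneg
  rw [hsplit]
  have := hrest
  nlinarith [hS0]

/-- Lower bound on the slope ratio when line `i₀` dominates with gap `g`. -/
lemma anchor_le_ratio (hn : 0 < n) (ht : 0 < t) {g : ℝ} (hg : 0 ≤ g) (hi₀ : i₀ < n)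
    (hm0 : ∀ i < n, 0 ≤ m i)
    (hgap : ∀ i < n, i ≠ i₀ → c' i₀ - m i₀ * x + g ≤ c' i - m i * x) :
    m i₀ - m i₀ * n * Real.exp (-g / t) ≤ Sf n t m c' 1 x / Sf n t m c' 0 x := by
  have hS0 := Sf0_pos (n := n) (t := t) (m := m) (c' := c') (x := x) hn
  rw [le_div_iff₀ hS0]
  have hq : (0:ℝ) ≤ (n : ℝ) * Real.exp (-g/t) := by positivity
  set q : ℝ := (n : ℝ) * Real.exp (-g/t) with hqdef
  have hi₀m := hm0 i₀ hi₀
  rcases le_or_gt (1 : ℝ) q with hq1 | hq1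
  · have h1 : m i₀ - m i₀ * q ≤ 0 := by nlinarith
    have h2 : 0 ≤ Sf n t m c' 1 x := Sf_nonneg hm0 1
    have hqq : m i₀ - m i₀ * ↑n * Real.exp (-g / t) = m i₀ - m i₀ * q := by
      rw [hqdef]; ring
    rw [hqq]
    nlinarith
  · -- S0 ≤ E i₀ * (1 + q)
    have hS0le : Sf n t m c' 0 x ≤ Ef t m c' x i₀ * (1 + q) := by
      have hsplit : Sf n t m c' 0 x
          = (m i₀)^0 * Ef t m c' x i₀ + ∑ i ∈ (Finset.range n).erase i₀, (m i)^0 * Ef t m c' x i := by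
        rw [Sf, ← Finset.add_sum_erase _ _ (Finset.mem_range.mpr hi₀)]
      have hrest : ∑ i ∈ (Finset.range n).erase i₀, (m i)^0 * Ef t m c' x i
          ≤ q * Ef t m c' x i₀ := by
        calc ∑ i ∈ (Finset.range n).erase i₀, (m i)^0 * Ef t m c' x i
            ≤ ∑ _i ∈ (Finset.range n).erase i₀, Real.exp (-g/t) * Ef t m c' x i₀ := by
              apply Finset.sum_le_sum
              intro i hi
              obtain ⟨hne, hilt⟩ := Finset.mem_erase.mp hi
              rw [pow_zero, one_mul]
              exact Ef_le_of_gap ht (hgap i (Finset.mem_range.mp hilt) hne)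
          _ = ((Finset.range n).erase i₀).card * (Real.exp (-g/t) * Ef t m c' x i₀) := by
              rw [Finset.sum_const, nsmul_eq_mul]
          _ ≤ (n : ℝ) * (Real.exp (-g/t) * Ef t m c' x i₀) := by
              apply mul_le_mul_of_nonneg_right _
                (mul_nonneg (Real.exp_nonneg _) Ef_pos.le)
              exact Nat.cast_le.mpr ((Finset.card_erase_le).trans (le_of_eq (Finset.card_range n)))
          _ = q * Ef t m c' x i₀ := by rw [hqdef]; ring
      rw [hsplit, pow_zero, one_mul]
      linarith
    have hS1ge : (m i₀) * Ef t m c' x i₀ ≤ Sf n t m c' 1 x := by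
      have := Finset.single_le_sum (f := fun j => (m j)^1 * Ef t m c' x j)
        (fun j hj => mul_nonneg (by rw [pow_one]; exact hm0 j (Finset.mem_range.mp hj)) Ef_pos.le)
        (Finset.mem_range.mpr hi₀)
      simpa [Sf] using this
    have hE := Ef_pos (t := t) (m := m) (c' := c') (x := x) (i := i₀)
    have hqq : m i₀ - m i₀ * ↑n * Real.exp (-g / t) = m i₀ * (1 - q) := by
      rw [hqdef]; ring
    rw [hqq]
    have key : m i₀ * (1 - q) * Sf n t m c' 0 x ≤ m i₀ * (1 - q) * (Ef t m c' x i₀ * (1 + q)) :=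
      mul_le_mul_of_nonneg_left hS0le (mul_nonneg hi₀m (by linarith))
    nlinarith [sq_nonneg q, mul_nonneg hi₀m hE.le, mul_nonneg (mul_nonneg hi₀m hE.le) (sq_nonneg q)]
end LSE2



noncomputable def cf (K : Set (ℝ × ℝ)) (m : ℝ) : ℝ :=
  sSup ((fun w : ℝ × ℝ => m * w.1 + w.2) '' K)

def fat (Ω : Set (ℝ × ℝ)) (e : ℝ) : Set (ℝ × ℝ) :=
  {p | 0 ≤ p.1 ∧ 0 ≤ p.2 ∧ ∃ q ∈ Ω, p.1 ≤ q.1 + e ∧ p.2 ≤ q.2 + e}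

section Geo
variable {Ω : Set (ℝ × ℝ)} {e : ℝ}

lemma subset_fat (hΩ : MomentDomain Ω) (he : 0 < e) : Ω ⊆ fat Ω e := by
  intro p hp
  obtain ⟨h1, h2⟩ := hΩ.2.2.2.1 p hp
  exact ⟨h1, h2, p, hp, by linarith, by linarith⟩

lemma fat_quad : ∀ p ∈ fat Ω e, 0 ≤ p.1 ∧ 0 ≤ p.2 := fun p hp => ⟨hp.1, hp.2.1⟩

lemma fat_down : ∀ p ∈ fat Ω e, ∀ q : ℝ × ℝ, 0 ≤ q.1 → q.1 ≤ p.1 → 0 ≤ q.2 → q.2 ≤ p.2 →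
    q ∈ fat Ω e := by
  rintro p ⟨h1, h2, w, hw, hw1, hw2⟩ q hq1 hq1' hq2 hq2'
  exact ⟨hq1, hq2, w, hw, by linarith, by linarith⟩

lemma fat_convex (hΩ : MomentDomain Ω) : Convex ℝ (fat Ω e) := by
  rintro p ⟨hp1, hp2, wp, hwp, hwp1, hwp2⟩ q ⟨hq1, hq2, wq, hwq, hwq1, hwq2⟩ s r hs hr hsr
  refine ⟨?_, ?_, s • wp + r • wq, hΩ.2.2.1 hwp hwq hs hr hsr, ?_, ?_⟩
  · simpa using add_nonneg (mul_nonneg hs hp1) (mul_nonneg hr hq1)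
  · simpa using add_nonneg (mul_nonneg hs hp2) (mul_nonneg hr hq2)
  · simp only [Prod.fst_add, Prod.smul_fst, smul_eq_mul]
    have he' : s * e + r * e = e := by rw [← add_mul, hsr, one_mul]
    nlinarith [mul_le_mul_of_nonneg_left hwp1 hs, mul_le_mul_of_nonneg_left hwq1 hr]
  · simp only [Prod.snd_add, Prod.smul_snd, smul_eq_mul]
    have he' : s * e + r * e = e := by rw [← add_mul, hsr, one_mul]
    nlinarith [mul_le_mul_of_nonneg_left hwp2 hs, mul_le_mul_of_nonneg_left hwq2 hr]

lemma fat_eq_image (hΩ : MomentDomain Ω) (he : 0 < e) :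
    fat Ω e = (fun qs : (ℝ × ℝ) × (ℝ × ℝ) => (qs.2.1 * (qs.1.1 + e), qs.2.2 * (qs.1.2 + e))) ''
      (Ω ×ˢ (Set.Icc (0:ℝ) 1 ×ˢ Set.Icc (0:ℝ) 1)) := by
  ext p
  constructor
  · rintro ⟨h1, h2, w, hw, hw1, hw2⟩
    obtain ⟨hwq1, hwq2⟩ := hΩ.2.2.2.1 w hw
    have hd1 : (0:ℝ) < w.1 + e := by linarith
    have hd2 : (0:ℝ) < w.2 + e := by linarith
    refine ⟨⟨w, (p.1 / (w.1 + e), p.2 / (w.2 + e))⟩, ⟨hw, ?_, ?_⟩, ?_⟩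
    · exact Set.mem_Icc.mpr ⟨div_nonneg h1 hd1.le, (div_le_one hd1).mpr hw1⟩
    · exact Set.mem_Icc.mpr ⟨div_nonneg h2 hd2.le, (div_le_one hd2).mpr hw2⟩
    · simp only
      rw [div_mul_cancel₀ _ hd1.ne', div_mul_cancel₀ _ hd2.ne']
  · rintro ⟨⟨w, s⟩, ⟨hw, hs1, hs2⟩, rfl⟩
    obtain ⟨hwq1, hwq2⟩ := hΩ.2.2.2.1 w hw
    obtain ⟨hs10, hs11⟩ := Set.mem_Icc.mp hs1
    obtain ⟨hs20, hs21⟩ := Set.mem_Icc.mp hs2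
    refine ⟨by positivity, by positivity, w, hw, ?_, ?_⟩
    · simp only; nlinarith
    · simp only; nlinarith

lemma fat_compact (hΩ : MomentDomain Ω) (he : 0 < e) : IsCompact (fat Ω e) := by
  rw [fat_eq_image hΩ he]
  apply IsCompact.image
  · exact (hΩ.2.1.prod (isCompact_Icc.prod isCompact_Icc))
  · apply Continuous.prodMk
    · exact (continuous_snd.fst.mul (continuous_fst.fst.add continuous_const))
    · exact (continuous_snd.snd.mul (continuous_fst.snd.add continuous_const))

lemma fat_close (hΩ : MomentDomain Ω) (he : 0 < e) :
    ∀ p ∈ fat Ω e, ∃ q ∈ Ω, dist p q ≤ e := by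
  rintro p ⟨h1, h2, w, hw, hw1, hw2⟩
  obtain ⟨hwq1, hwq2⟩ := hΩ.2.2.2.1 w hw
  refine ⟨(min p.1 w.1, min p.2 w.2), hΩ.2.2.2.2 w hw _ (le_min h1 hwq1) (min_le_right _ _)
    (le_min h2 hwq2) (min_le_right _ _), ?_⟩
  rw [Prod.dist_eq]
  apply max_le
  · have h3 : p.1 - min p.1 w.1 ≤ e ∧ 0 ≤ p.1 - min p.1 w.1 := by
      rcases le_total p.1 w.1 with h | h
      · rw [min_eq_left h]; constructor <;> linarith
      · rw [min_eq_right h]; constructor <;> linarith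
    rw [Real.dist_eq, abs_le]
    constructor <;> simp only <;> linarith [h3.1, h3.2]
  · have h3 : p.2 - min p.2 w.2 ≤ e ∧ 0 ≤ p.2 - min p.2 w.2 := by
      rcases le_total p.2 w.2 with h | h
      · rw [min_eq_left h]; constructor <;> linarith
      · rw [min_eq_right h]; constructor <;> linarith
    rw [Real.dist_eq, abs_le]
    constructor <;> simp only <;> linarith [h3.1, h3.2]

end Geo

section Support
variable {K : Set (ℝ × ℝ)} {m m' : ℝ}

lemma cf_bdd (hK : IsCompact K) (m : ℝ) :
    BddAbove ((fun w : ℝ × ℝ => m * w.1 + w.2) '' K) :=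
  (hK.image ((continuous_const.mul continuous_fst).add continuous_snd)).bddAbove

lemma le_cf (hK : IsCompact K) {p : ℝ × ℝ} (hp : p ∈ K) : m * p.1 + p.2 ≤ cf K m :=
  le_csSup (cf_bdd hK m) ⟨p, hp, rfl⟩

lemma cf_le (hne : K.Nonempty) {v : ℝ} (h : ∀ p ∈ K, m * p.1 + p.2 ≤ v) : cf K m ≤ v :=
  csSup_le (hne.image _) (by rintro x ⟨p, hp, rfl⟩; exact h p hp)

lemma cf_mono (hK : IsCompact K) (hne : K.Nonempty) (hquad : ∀ p ∈ K, 0 ≤ p.1 ∧ 0 ≤ p.2)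
    (hmm : m ≤ m') : cf K m ≤ cf K m' := by
  apply cf_le hne
  intro p hp
  have := le_cf (m := m') hK hp
  nlinarith [(hquad p hp).1]

lemma cf_exists_max (hK : IsCompact K) (hne : K.Nonempty) (m : ℝ) :
    ∃ p ∈ K, m * p.1 + p.2 = cf K m ∧ ∀ w ∈ K, m * w.1 + w.2 ≤ m * p.1 + p.2 := by
  obtain ⟨p, hp, hmax⟩ := hK.exists_isMaxOn hne
    (((continuous_const.mul continuous_fst).add continuous_snd).continuousOn)
  refine ⟨p, hp, le_antisymm (le_cf hK hp) (cf_le hne fun w hw => hmax hw), fun w hw => hmax hw⟩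

/-- The key separation characterization. -/
lemma mem_of_constraints (hconv : Convex ℝ K) (hK : IsCompact K) (hne : K.Nonempty)
    (hquad : ∀ p ∈ K, 0 ≤ p.1 ∧ 0 ≤ p.2)
    (hdown : ∀ p ∈ K, ∀ q : ℝ × ℝ, 0 ≤ q.1 → q.1 ≤ p.1 → 0 ≤ q.2 → q.2 ≤ p.2 → q ∈ K)
    (z : ℝ × ℝ) (hz1 : 0 ≤ z.1) (hz2 : 0 ≤ z.2)
    (hzA : ∃ pA ∈ K, z.1 ≤ pA.1)
    (hc : ∀ m : ℝ, 0 ≤ m → m * z.1 + z.2 ≤ cf K m) : z ∈ K := by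
  by_contra hznot
  obtain ⟨f, u, hfz, hfK⟩ := geometric_hahn_banach_point_closed hconv hK.isClosed hznot
  set p' : ℝ := -(f (1, 0)) with hp'
  set q' : ℝ := -(f (0, 1)) with hq'
  have hf : ∀ w : ℝ × ℝ, f w = -(w.1 * p' + w.2 * q') := by
    intro w
    have hw : w = w.1 • ((1:ℝ), (0:ℝ)) + w.2 • ((0:ℝ), (1:ℝ)) := by
      ext <;> simp
    rw [hw, map_add, map_smul, map_smul, hp', hq']
    simp [smul_eq_mul]
    ring
  -- K side: ∀ w ∈ K, w.1 * p' + w.2 * q' < -u ; z side: -u < z.1 * p' + z.2 * q'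
  have hKside : ∀ w ∈ K, w.1 * p' + w.2 * q' < -u := by
    intro w hw
    have := hfK w hw
    rw [hf w] at this
    linarith
  have hzside : -u < z.1 * p' + z.2 * q' := by
    rw [hf z] at hfz
    linarith
  set P : ℝ := max p' 0 with hP
  set Q : ℝ := max q' 0 with hQ
  have hPnn : 0 ≤ P := le_max_right _ _
  have hQnn : 0 ≤ Q := le_max_right _ _
  have hzPQ : -u < z.1 * P + z.2 * Q := by
    have h1 : z.1 * p' ≤ z.1 * P := mul_le_mul_of_nonneg_left (le_max_left _ _) hz1
    have h2 : z.2 * q' ≤ z.2 * Q := mul_le_mul_of_nonneg_left (le_max_left _ _) hz2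
    linarith
  have hKPQ : ∀ w ∈ K, w.1 * P + w.2 * Q < -u := by
    intro w hw
    obtain ⟨hw1, hw2⟩ := hquad w hw
    set w' : ℝ × ℝ := (if 0 ≤ p' then w.1 else 0, if 0 ≤ q' then w.2 else 0) with hw'
    have hw'K : w' ∈ K := by
      apply hdown w hw
      · by_cases h : 0 ≤ p' <;> simp [hw', h, hw1]
      · by_cases h : 0 ≤ p' <;> simp [hw', h, hw1]
      · by_cases h : 0 ≤ q' <;> simp [hw', h, hw2]
      · by_cases h : 0 ≤ q' <;> simp [hw', h, hw2]
    have heq : w.1 * P + w.2 * Q = w'.1 * p' + w'.2 * q' := by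
      rw [hw']
      simp only
      by_cases h1 : 0 ≤ p' <;> by_cases h2 : 0 ≤ q' <;>
        simp [hP, hQ, max_eq_left, max_eq_right, h1, h2, le_of_not_ge] <;>
        first
        | ring
        | (rw [max_eq_right (le_of_lt (lt_of_not_ge h1))] <;> ring_nf)
    rw [heq]
    exact hKside w' hw'K
  rcases lt_or_eq_of_le hQnn with hQpos | hQzero
  · -- Q > 0 : use m = P / Q
    have hm : (0:ℝ) ≤ P / Q := div_nonneg hPnn hQpos.le
    have hcm := hc (P / Q) hm
    have hcf : cf K (P / Q) ≤ -u / Q := by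
      apply cf_le hne
      intro w hw
      rw [div_mul_eq_mul_div, div_add' _ _ _ hQpos.ne', div_le_div_iff₀ hQpos hQpos]
      have := hKPQ w hw
      nlinarith
    have hle : (P / Q) * z.1 + z.2 ≤ -u / Q := le_trans hcm hcf
    rw [div_mul_eq_mul_div, div_add' _ _ _ hQpos.ne', div_le_div_iff₀ hQpos hQpos] at hle
    nlinarith
  · -- Q = 0
    rcases lt_or_eq_of_le hPnn with hPpos | hPzero
    · obtain ⟨pA, hpA, hzpA⟩ := hzA
      have h1 : (pA.1, (0:ℝ)) ∈ K := hdown pA hpA _ (hquad pA hpA).1 le_rfl le_rfl (hquad pA hpA).2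
      have h2 := hKPQ _ h1
      simp only at h2
      have : z.1 * P ≤ pA.1 * P := mul_le_mul_of_nonneg_right hzpA hPnn
      nlinarith
    · -- P = Q = 0
      obtain ⟨w, hw⟩ := hne
      have h0 : ((0:ℝ), (0:ℝ)) ∈ K := hdown w hw _ le_rfl (hquad w hw).1 le_rfl (hquad w hw).2
      have h2 := hKPQ _ h0
      simp only at h2
      rw [← hPzero, ← hQzero] at hzPQ
      simp at hzPQ h2
      linarith

end Support

end Stmt11

set_option maxHeartbeats 2000000 in
/-- the fully rounding approximation lemma: any moment domain is
`ε`-close in Hausdorff distance to a region under the graph of a smooth, strictly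
decreasing, strictly concave function with nearly right angles at the axes and
irrational boundary slopes. -/
theorem stmt_11 (Ω : Set (ℝ × ℝ)) (hΩ : MomentDomain Ω)
    (ε ν : ℝ) (hε : 0 < ε) (hν : 0 < ν) :
    ∃ (a b : ℝ) (h : ℝ → ℝ), 0 < a ∧ 0 < b ∧
      ContDiff ℝ (⊤ : ℕ∞) h ∧ h 0 = b ∧ h a = 0 ∧
      StrictAntiOn h (Set.Icc 0 a) ∧
      StrictConcaveOn ℝ (Set.Icc 0 a) h ∧
      -ν < deriv h 0 ∧ deriv h 0 < 0 ∧ deriv h a < -(1 / ν) ∧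
      Irrational (deriv h 0) ∧ Irrational (deriv h a) ∧
      Metric.hausdorffDist Ω
        {p : ℝ × ℝ | 0 ≤ p.1 ∧ p.1 ≤ a ∧ 0 ≤ p.2 ∧ p.2 ≤ h p.1} ≤ ε := by
  classical
  obtain ⟨hne, hcomp, hconv, hquad, hdown⟩ := hΩ
  have hΩ' : MomentDomain Ω := ⟨hne, hcomp, hconv, hquad, hdown⟩
  set ε' : ℝ := min ε 1 with hε'def
  have hε' : 0 < ε' := lt_min hε one_pos
  have hε'ε : ε' ≤ ε := min_le_left _ _
  have hε'1 : ε' ≤ 1 := min_le_right _ _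
  clear_value ε'
  set e : ℝ := ε' / 8 with he_def
  have he : 0 < e := by positivity
  have he8 : 8 * e = ε' := by rw [he_def]; ring
  clear_value e
  -- the fattened domain K
  set K : Set (ℝ × ℝ) := Stmt11.fat Ω e with hKdef
  have hKne : K.Nonempty := hne.mono (Stmt11.subset_fat hΩ' he)
  have hKcomp : IsCompact K := Stmt11.fat_compact hΩ' he
  have hKconv : Convex ℝ K := Stmt11.fat_convex hΩ'
  have hKquad : ∀ p ∈ K, 0 ≤ p.1 ∧ 0 ≤ p.2 := Stmt11.fat_quad
  have hKdown : ∀ p ∈ K, ∀ q : ℝ × ℝ, 0 ≤ q.1 → q.1 ≤ p.1 → 0 ≤ q.2 → q.2 ≤ p.2 → q ∈ K :=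
    Stmt11.fat_down
  have hΩK : Ω ⊆ K := Stmt11.subset_fat hΩ' he
  have hKclose : ∀ p ∈ K, ∃ q ∈ Ω, dist p q ≤ e := Stmt11.fat_close hΩ' he
  -- A and B
  obtain ⟨qA, hqA, hqAmax⟩ := hcomp.exists_isMaxOn hne continuous_fst.continuousOn
  obtain ⟨qB, hqB, hqBmax⟩ := hcomp.exists_isMaxOn hne continuous_snd.continuousOn
  have hqA1 : 0 ≤ qA.1 := (hquad qA hqA).1
  have hqA2 : 0 ≤ qA.2 := (hquad qA hqA).2
  have hqB1 : 0 ≤ qB.1 := (hquad qB hqB).1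
  have hqB2 : 0 ≤ qB.2 := (hquad qB hqB).2
  set A : ℝ := qA.1 + e with hAdef
  set B : ℝ := qB.2 + e with hBdef
  have heA : e ≤ A := by rw [hAdef]; linarith
  have heB : e ≤ B := by rw [hBdef]; linarith
  have hA0 : 0 ≤ A := le_trans he.le heA
  have hB0 : 0 ≤ B := le_trans he.le heB
  have hAmax : ∀ w ∈ K, w.1 ≤ A := by
    rw [hKdef]
    rintro w ⟨h1, h2, q, hq, hq1, hq2⟩
    have h3 : q.1 ≤ qA.1 := hqAmax hq
    rw [hAdef]
    linarith
  have hBmax : ∀ w ∈ K, w.2 ≤ B := by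
    rw [hKdef]
    rintro w ⟨h1, h2, q, hq, hq1, hq2⟩
    have h3 : q.2 ≤ qB.2 := hqBmax hq
    rw [hBdef]
    linarith
  have hAeK : ((A : ℝ), e) ∈ K := by
    rw [hKdef]
    refine ⟨by simp; linarith, by simp; exact he.le, qA, hqA, by simp [hAdef], by simp; linarith⟩
  have h0BK : ((0 : ℝ), B) ∈ K := by
    rw [hKdef]
    refine ⟨le_rfl, by simp; linarith, qB, hqB, by simp; linarith, by simp [hBdef]⟩
  have hA0K : ((A : ℝ), (0:ℝ)) ∈ K := hKdown _ hAeK _ (by simp; linarith) le_rfl le_rfl he.le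
  clear_value A B
  clear_value K
  -- support function facts
  have hcfB : ∀ m : ℝ, 0 ≤ m → B ≤ Stmt11.cf K m := by
    intro m hm
    have := Stmt11.le_cf (m := m) hKcomp h0BK
    simpa using this
  have hcfAe : ∀ m : ℝ, m * A + e ≤ Stmt11.cf K m := by
    intro m
    have := Stmt11.le_cf (m := m) hKcomp hAeK
    simpa using this
  have hcfUB : ∀ m : ℝ, 0 ≤ m → Stmt11.cf K m ≤ m * A + B := by
    intro m hm
    apply Stmt11.cf_le hKne
    intro p hp
    have h1 := hAmax p hp
    have h2 := hBmax p hp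
    have h3 := (hKquad p hp).1
    nlinarith
  have hcfmono : ∀ m m' : ℝ, m ≤ m' → Stmt11.cf K m ≤ Stmt11.cf K m' :=
    fun m m' hmm => Stmt11.cf_mono hKcomp hKne hKquad hmm
  -- parameters θ μ M₀ Δ n M
  set θ : ℝ := ε' / (8 * (A + B + 1)) with hθdef
  have hθ : 0 < θ := by rw [hθdef]; positivity
  have hθ8 : θ ≤ 1/8 := by
    rw [hθdef, div_le_div_iff₀ (by positivity) (by positivity)]
    nlinarith
  have hθA : θ * A ≤ ε' / 8 := by
    rw [hθdef, div_mul_eq_mul_div, div_le_div_iff₀ (by positivity) (by positivity)]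
    nlinarith
  have hθB : θ * B ≤ ε' / 8 := by
    rw [hθdef, div_mul_eq_mul_div, div_le_div_iff₀ (by positivity) (by positivity)]
    nlinarith
  clear_value θ
  have hBpos : 0 < B := lt_of_lt_of_le he heB
  have hApos : 0 < A := lt_of_lt_of_le he heA
  have hθBpos : 0 < θ * B := mul_pos hθ hBpos
  set μ : ℝ := min (θ * B / (A + 1)) (ν/4) with hμdef
  have hμpos : 0 < μ := lt_min (by positivity) (by positivity)
  have hμA : μ * A ≤ θ * B := by
    calc μ * A ≤ (θ * B / (A + 1)) * A :=
          mul_le_mul_of_nonneg_right (min_le_left _ _) hA0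
      _ ≤ θ * B := by
          rw [div_mul_eq_mul_div, div_le_iff₀ (by positivity)]
          nlinarith
  have hμν : μ ≤ ν/4 := min_le_right _ _
  clear_value μ
  set M₀ : ℝ := B / (θ * e) + 8 * (B + 1) / ε' + 1/ν + μ + 1 with hM₀def
  set Δ : ℝ := θ * B / (2 * (A + 2)) with hΔdef
  have hΔ : 0 < Δ := by rw [hΔdef]; positivity
  have hΔA : Δ * (A + 1) ≤ θ * B / 2 := by
    rw [hΔdef, div_mul_eq_mul_div, div_le_div_iff₀ (by positivity) (by positivity)]
    nlinarith
  clear_value Δ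
  set n : ℕ := ⌈(M₀ - μ) / Δ⌉₊ + 2 with hndef
  have hn2 : 2 ≤ n := by omega
  have hn0 : 0 < n := by omega
  have hn0R : (0:ℝ) < (n:ℝ) := by exact_mod_cast hn0
  have hnceil : (M₀ - μ) / Δ ≤ ((n - 1 : ℕ) : ℝ) := by
    have h1 := Nat.le_ceil ((M₀ - μ) / Δ)
    have h2 : (⌈(M₀ - μ)/Δ⌉₊ : ℝ) ≤ ((n-1 : ℕ) : ℝ) := by
      have : ⌈(M₀-μ)/Δ⌉₊ ≤ n - 1 := by omega
      exact_mod_cast this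
    linarith
  clear_value n
  set sl : ℕ → ℝ := fun i => μ + i * Δ with hsldef
  set M : ℝ := sl (n - 1) with hMdef
  have hMeq : M = μ + ((n-1 : ℕ) : ℝ) * Δ := by rw [hMdef, hsldef]
  have hslmono : ∀ i j : ℕ, i ≤ j → sl i ≤ sl j := by
    intro i j hij
    rw [hsldef]
    simp only
    have h1 : (i:ℝ) ≤ (j:ℝ) := by exact_mod_cast hij
    nlinarith
  have hsl0 : sl 0 = μ := by rw [hsldef]; simp
  have hslpos : ∀ i, 0 < sl i := by
    intro i
    rw [hsldef]
    simp only
    positivity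
  have hslstep : ∀ i : ℕ, sl (i + 1) = sl i + Δ := by
    intro i
    rw [hsldef]
    simp only
    push_cast
    ring
  clear_value sl
  have hslM : ∀ i < n, sl i ≤ M := fun i hi => hMdef ▸ hslmono i (n-1) (by omega)
  have hMpos : 0 < M := hMdef ▸ hslpos _
  clear_value M
  have hM₀M : M₀ ≤ M := by
    have h1 := mul_le_mul_of_nonneg_right hnceil hΔ.le
    rw [div_mul_cancel₀ _ hΔ.ne'] at h1
    rw [hMeq]
    linarith
  have hM₀lb : B / (θ * e) ≤ M₀ ∧ 8 * (B + 1) / ε' ≤ M₀ ∧ 1/ν + 1 ≤ M₀ := by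
    have p1 : 0 ≤ B / (θ * e) := by positivity
    have p2 : 0 ≤ 8 * (B + 1) / ε' := by positivity
    have p3 : 0 ≤ 1/ν := by positivity
    rw [hM₀def]
    refine ⟨by linarith [hμpos], by linarith [hμpos], by linarith [hμpos]⟩
  have hMB : B ≤ θ * M * e := by
    have h1 : B / (θ * e) ≤ M := le_trans hM₀lb.1 hM₀M
    have h2 : 0 < θ * e := by positivity
    calc B = B / (θ*e) * (θ*e) := by field_simp
      _ ≤ M * (θ*e) := mul_le_mul_of_nonneg_right h1 h2.le
      _ = θ * M * e := by ring
  have hMν : 1/ν + 1 ≤ M := le_trans hM₀lb.2.2 hM₀M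
  have hMε : 8 * (B + 1) / ε' ≤ M := le_trans hM₀lb.2.1 hM₀M
  have hslgapM : ∀ i, i < n - 1 → sl i + Δ ≤ M := by
    intro i hi
    rw [← hslstep i, hMdef]
    exact hslmono _ _ (by omega)
  clear_value M₀
  -- σ, a, co
  set σ : ℝ := min (e * Δ / (2 * M)) (θ * B / 8) with hσdef
  have hσpos : 0 < σ := lt_min (by positivity) (by positivity)
  have hσ1 : σ * (2 * M) ≤ e * Δ := by
    have := min_le_left (e * Δ / (2 * M)) (θ * B / 8)
    rw [← hσdef] at this
    rw [← le_div_iff₀ (by positivity)]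
    exact this
  have hσ2 : σ ≤ θ * B / 8 := by rw [hσdef]; exact min_le_right _ _
  clear_value σ
  set co : ℕ → ℝ := fun i => Stmt11.cf K (sl i) + (if i = 0 then 0 else σ) with hcodef
  have hco_lb : ∀ i, Stmt11.cf K (sl i) ≤ co i := by
    intro i
    rw [hcodef]
    simp only
    split <;> simp [hσpos.le]
  have hco_ub : ∀ i, co i ≤ Stmt11.cf K (sl i) + σ := by
    intro i
    rw [hcodef]
    simp only
    split <;> simp [hσpos.le]
  have hco0 : co 0 = Stmt11.cf K (sl 0) := by rw [hcodef]; simp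
  have hcon1 : co (n-1) = Stmt11.cf K M + σ := by
    rw [hcodef]
    simp only
    rw [if_neg (by omega), hMdef]
  clear_value co
  set a : ℝ := (Stmt11.cf K M + σ) / M with hadef
  have haM : M * a = Stmt11.cf K M + σ := by
    rw [hadef]; field_simp
  have haA : A + (e + σ) / M ≤ a := by
    have h1 := hcfAe M
    rw [hadef, le_div_iff₀ hMpos]
    have h2 : (A + (e + σ)/M) * M = A * M + (e + σ) := by field_simp
    rw [h2]
    linarith
  have haAub : a ≤ A + (B + σ) / M := by
    have h1 := hcfUB M hMpos.le
    rw [hadef, div_le_iff₀ hMpos]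
    have h2 : (A + (B + σ)/M) * M = A * M + (B + σ) := by field_simp
    rw [h2]
    linarith
  have hBσM : (B + σ) / M ≤ ε' / 8 := by
    have h1 : 8 * (B+1) ≤ M * ε' := (div_le_iff₀ hε').mp hMε
    have hσsmall : σ ≤ 1 := by linarith [hσ2, hθB, hε'1]
    rw [div_le_iff₀ hMpos]
    linarith
  have hAa : A ≤ a := by
    have : 0 ≤ (e + σ)/M := by positivity
    linarith
  have haA1 : a ≤ A + 1 := by
    have := hBσM
    linarith [hε'1]
  have hapos : 0 < a := by linarith [he.le, heA]
  clear_value a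
  -- gaps
  have hcon1a : co (n-1) - sl (n-1) * a = 0 := by
    rw [hcon1, ← hMdef]
    linarith [haM]
  have hgapa : ∀ i < n, i ≠ n - 1 → co (n-1) - sl (n-1) * a + σ ≤ co i - sl i * a := by
    intro i hi hine
    have hin1 : i < n - 1 := by omega
    obtain ⟨pM, hpMK, hpMeq, _⟩ := Stmt11.cf_exists_max hKcomp hKne M
    have hxA : pM.1 ≤ A := hAmax _ hpMK
    have hx0 : 0 ≤ pM.1 := (hKquad _ hpMK).1
    have hy0 : 0 ≤ pM.2 := (hKquad _ hpMK).2
    have hyM : e ≤ pM.2 := by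
      have hp1 := mul_nonneg hMpos.le (sub_nonneg.mpr hxA)
      linarith [hcfAe M, hpMeq, hp1]
    have h1 : sl i * pM.1 + pM.2 ≤ Stmt11.cf K (sl i) := Stmt11.le_cf hKcomp hpMK
    have hMD : M * (a - pM.1) = pM.2 + σ := by linarith [haM, hpMeq]
    have hD0 : 0 ≤ a - pM.1 := by
      rcases le_or_gt 0 (a - pM.1) with hcs | hcs
      · exact hcs
      · exfalso
        have := mul_neg_of_pos_of_neg hMpos hcs
        linarith [hMD, hy0, hσpos]
    have h3 : sl i * (a - pM.1) ≤ (M - Δ) * (a - pM.1) :=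
      mul_le_mul_of_nonneg_right (by linarith [hslgapM i hin1]) hD0
    have f6 : 2*σ*M ≤ Δ * (M * (a - pM.1)) := by
      rw [hMD]
      have hp2 := mul_le_mul_of_nonneg_left hyM hΔ.le
      have hp3 := mul_nonneg hΔ.le hσpos.le
      linarith [hσ1, hp2, hp3]
    have f7 : 2*σ ≤ Δ * (a - pM.1) := by
      rcases le_or_gt (2*σ) (Δ * (a - pM.1)) with hcs | hcs
      · exact hcs
      · exfalso
        have := mul_lt_mul_of_pos_left hcs hMpos
        linarith [f6]
    have f8 : sl i * a = sl i * pM.1 + sl i * (a - pM.1) := by ring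
    rw [hcon1a]
    have hco := hco_lb i
    linarith [hMD, h3, f7, h1, f8, hco]
  have hgap0 : ∀ i < n, i ≠ 0 → co 0 - sl 0 * 0 + σ ≤ co i - sl i * 0 := by
    intro i hi hine
    rw [hco0]
    have h1 : Stmt11.cf K (sl 0) ≤ Stmt11.cf K (sl i) := hcfmono _ _ (hslmono 0 i (Nat.zero_le i))
    have h2 : Stmt11.cf K (sl i) + σ ≤ co i := by
      rw [hcodef]
      simp only
      rw [if_neg hine]
    simp only [mul_zero]
    linarith
  -- t and κ
  set t : ℝ := min (σ * min ν 1 / (8 * M * n)) (ε' * min (θ*B) 1 / (8 * n)) with htdef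
  have hminν : 0 < min ν 1 := lt_min hν one_pos
  have hminθB : 0 < min (θ*B) 1 := lt_min hθBpos one_pos
  have ht : 0 < t := by
    apply lt_min
    · positivity
    · positivity
  have ht1 : t ≤ σ * min ν 1 / (8 * M * n) := min_le_left _ _
  have ht2 : t ≤ ε' * min (θ*B) 1 / (8 * n) := min_le_right _ _
  clear_value t
  have htn : t * n ≤ ε' * min (θ*B) 1 / 8 := by
    have h1 := mul_le_mul_of_nonneg_right ht2 hn0R.le
    have h2 : ε' * min (θ*B) 1 / (8*n) * n = ε' * min (θ*B) 1 / 8 := by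
      field_simp
    linarith
  have htnε : t * n ≤ ε' / 8 := by
    have h1 : ε' * min (θ*B) 1 ≤ ε' * 1 := by
      apply mul_le_mul_of_nonneg_left (min_le_right _ _) hε'.le
    calc t * n ≤ ε' * min (θ*B) 1/8 := htn
      _ ≤ ε'/8 := by linarith
  have htnθB : t * n ≤ θ * B / 8 := by
    have h1 : ε' * min (θ*B) 1 ≤ 1 * (θ*B) := by
      apply mul_le_mul hε'1 (min_le_left _ _) hminθB.le zero_le_one
    calc t * n ≤ ε' * min (θ*B) 1/8 := htn
      _ ≤ θ*B/8 := by linarith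
  set κ : ℝ := M * n * Real.exp (-σ/t) with hκdef
  have hκ0 : 0 ≤ κ := by rw [hκdef]; positivity
  have hκν : κ ≤ min ν 1 / 8 := by
    have hexp : Real.exp (-σ/t) ≤ t/σ := by
      rw [neg_div, Real.exp_neg]
      rw [inv_le_comm₀ (Real.exp_pos _) (by positivity)]
      calc (t/σ)⁻¹ = σ/t := by rw [inv_div]
        _ ≤ Real.exp (σ/t) := by
            have := Real.add_one_le_exp (σ/t)
            have h0 : (0:ℝ) < σ/t := by positivity
            linarith
    have h2 : κ ≤ M * n * (t/σ) := by
      rw [hκdef]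
      apply mul_le_mul_of_nonneg_left hexp (by positivity)
    have h3 : M * n * (t/σ) ≤ min ν 1 / 8 := by
      have h4 := mul_le_mul_of_nonneg_right ht1 (by positivity : (0:ℝ) ≤ (n:ℝ)/σ * M)
      have h5 : σ * min ν 1 / (8*M*n) * ((n:ℝ)/σ * M) = min ν 1/8 := by
        field_simp
      have h6 : t * ((n:ℝ)/σ * M) = M * n * (t/σ) := by
        field_simp
      rw [h5, h6] at h4
      exact h4
    linarith
  clear_value κ
  -- slopes distinct
  have hsl01 : sl 0 ≠ sl 1 := by
    have h01 : sl 1 = sl 0 + Δ := hslstep 0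
    intro hcon
    rw [h01] at hcon
    linarith [hΔ]
  -- ratio bounds at the endpoints
  have hr0lb : μ ≤ Stmt11.Sf n t sl co 1 0 / Stmt11.Sf n t sl co 0 0 := by
    apply Stmt11.mu_le_ratio hn0 hμpos.le
    intro i _
    rw [← hsl0]
    exact hslmono 0 i (Nat.zero_le i)
  have hr0ub : Stmt11.Sf n t sl co 1 0 / Stmt11.Sf n t sl co 0 0 ≤ μ + κ := by
    have hh := Stmt11.ratio_le_anchor (n := n) (t := t) (m := sl) (c' := co) (x := 0)
      (i₀ := 0) hn0 ht (g := σ) (Mb := M) hn0 (fun i _ => (hslpos i).le) hslM hgap0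
    rw [hsl0] at hh
    rw [hκdef]
    linarith [hh]
  have hralb : M - κ ≤ Stmt11.Sf n t sl co 1 a / Stmt11.Sf n t sl co 0 a := by
    have hh := Stmt11.anchor_le_ratio (n := n) (t := t) (m := sl) (c' := co) (x := a)
      (i₀ := n - 1) hn0 ht hσpos.le (show n-1 < n by omega) (fun i _ => (hslpos i).le) hgapa
    rw [← hMdef] at hh
    rw [hκdef]
    linarith [hh]
  -- the perturbation constants
  set ι : ℝ := min (ν/4) (θ * B / (8 * (A + 2))) with hιdef
  have hιpos : 0 < ι := lt_min (by positivity) (by positivity)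
  have hιν : ι ≤ ν/4 := min_le_left _ _
  have hιa : ι * a ≤ θ * B / 8 := by
    have h0 : (0:ℝ) ≤ θ * B / (8 * (A + 2)) := by positivity
    calc ι * a ≤ (θ * B / (8 * (A + 2))) * (A+1) :=
          mul_le_mul (min_le_right _ _) haA1 hapos.le h0
      _ ≤ θ * B / 8 := by
          rw [div_mul_eq_mul_div, div_le_div_iff₀ (by positivity) (by positivity)]
          have h1 : 0 ≤ θ * B := hθBpos.le
          have h2 : θ * B * (A+1) * 8 = θ*B*A*8 + θ*B*8 := by ring
          have h3 : θ * B * (8*(A+2)) = θ*B*A*8 + θ*B*16 := by ring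
          linarith [h1, h2, h3, mul_nonneg (mul_nonneg h1 hA0) (by norm_num : (0:ℝ) ≤ 8)]
  clear_value ι
  obtain ⟨r0, hr0irr, hr0gt, hr0lt⟩ := exists_irrational_btwn
    (show -(Stmt11.Sf n t sl co 1 0 / Stmt11.Sf n t sl co 0 0) - ι
        < -(Stmt11.Sf n t sl co 1 0 / Stmt11.Sf n t sl co 0 0) by linarith)
  set β : ℝ := r0 + Stmt11.Sf n t sl co 1 0 / Stmt11.Sf n t sl co 0 0 with hβdef
  have hβneg : β < 0 := by rw [hβdef]; linarith
  have hβlb : -ι < β := by rw [hβdef]; linarith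
  clear_value β
  obtain ⟨ra, hrairr, hragt, hralt⟩ := exists_irrational_btwn
    (show -(Stmt11.Sf n t sl co 1 a / Stmt11.Sf n t sl co 0 a) + β - ι
        < -(Stmt11.Sf n t sl co 1 a / Stmt11.Sf n t sl co 0 a) + β by linarith)
  set γ : ℝ := (ra - (-(Stmt11.Sf n t sl co 1 a / Stmt11.Sf n t sl co 0 a) + β)) / (2 * a)
    with hγdef
  have hγneg : γ < 0 := div_neg_of_neg_of_pos (by linarith) (by linarith)
  have hγa : 2 * γ * a = ra + Stmt11.Sf n t sl co 1 a / Stmt11.Sf n t sl co 0 a - β := by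
    rw [hγdef]
    field_simp
    ring
  clear_value γ
  set α : ℝ := -(Stmt11.lse n t sl co a + β * a + γ * a^2) with hαdef
  clear_value α
  set h : ℝ → ℝ := fun x => Stmt11.lse n t sl co x + (α + β * x + γ * x^2) with hhdef
  have hha : h a = 0 := by
    simp only [hhdef]
    rw [hαdef]
    ring
  -- derivatives
  have hpoly : ∀ x : ℝ, HasDerivAt (fun x => α + β * x + γ * x^2) (β + 2*γ*x) x := by
    intro x
    have h1 : HasDerivAt (fun x : ℝ => γ * x^2) (γ * (2*x)) x := by
      have := (hasDerivAt_pow 2 x).const_mul γ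
      simpa using this
    have h2 : HasDerivAt (fun x : ℝ => α + β * x) β x := by
      simpa using ((hasDerivAt_id x).const_mul β).const_add α
    have h3 := h2.add h1
    refine h3.congr_deriv (Eq.symm ?_)
    ring
  have hDh : ∀ x : ℝ, HasDerivAt h
      (-(Stmt11.Sf n t sl co 1 x / Stmt11.Sf n t sl co 0 x) + (β + 2*γ*x)) x := by
    intro x
    rw [hhdef]
    exact (Stmt11.hasDerivAt_lse hn0 ht).add (hpoly x)
  have hderiv_fun : deriv h = fun x =>
      -(Stmt11.Sf n t sl co 1 x / Stmt11.Sf n t sl co 0 x) + (β + 2*γ*x) :=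
    funext fun x => (hDh x).deriv
  have hderiv0 : deriv h 0 = r0 := by
    simp only [hderiv_fun]
    rw [hβdef]
    ring
  have hderiva : deriv h a = ra := by
    simp only [hderiv_fun]
    linarith [hγa]
  have hd2 : ∀ x : ℝ, HasDerivAt (deriv h)
      (-((Stmt11.Sf n t sl co 2 x * Stmt11.Sf n t sl co 0 x - (Stmt11.Sf n t sl co 1 x)^2)
        / (t * (Stmt11.Sf n t sl co 0 x)^2)) + 2*γ) x := by
    intro x
    rw [hderiv_fun]
    have h1 := Stmt11.hasDerivAt_ratio (n := n) (t := t) (m := sl) (c' := co) (x := x) hn0 ht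
    have h2 : HasDerivAt (fun x : ℝ => β + 2*γ*x) (2*γ) x := by
      simpa using ((hasDerivAt_id x).const_mul (2*γ)).const_add β
    exact h1.add h2
  have hd2neg : ∀ x : ℝ, deriv (deriv h) x < 0 := by
    intro x
    rw [(hd2 x).deriv]
    have hnum := Stmt11.ratio_num_pos (n := n) (t := t) (m := sl) (c' := co) (x := x) hn2 hsl01
    have hS0 := Stmt11.Sf0_pos (n := n) (t := t) (m := sl) (c' := co) (x := x) hn0
    have hden : 0 < t * (Stmt11.Sf n t sl co 0 x)^2 := by positivity
    have := div_pos hnum hden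
    linarith
  have hdiff2 : Differentiable ℝ (deriv h) := fun x => (hd2 x).differentiableAt
  have hderiv_anti : StrictAnti (deriv h) := strictAnti_of_deriv_neg hd2neg
  have hcont : ContDiff ℝ (⊤ : ℕ∞) h := by
    rw [hhdef]
    apply (Stmt11.contDiff_lse hn0).add
    exact (contDiff_const.add (contDiff_const.mul contDiff_id)).add
      (contDiff_const.mul (contDiff_id.pow 2))
  have hr0neg : r0 < 0 := by linarith [hr0lt, hr0lb, hμpos]
  have hanti : StrictAntiOn h (Set.Icc 0 a) := by
    apply strictAntiOn_of_deriv_neg (convex_Icc 0 a) hcont.continuous.continuousOn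
    intro x hx
    rw [interior_Icc] at hx
    have h1 : deriv h x < deriv h 0 := hderiv_anti hx.1
    rw [hderiv0] at h1
    linarith
  have hconc : StrictConcaveOn ℝ (Set.Icc 0 a) h := by
    apply strictConcaveOn_of_deriv2_neg (convex_Icc 0 a) hcont.continuous.continuousOn
    intro x hx
    have hiter : deriv^[2] h x = deriv (deriv h) x := by
      simp only [Function.iterate_succ, Function.iterate_zero, Function.comp_apply, id_eq]
    rw [hiter]
    exact hd2neg x
  have hb : 0 < h 0 := by
    have hlt := hanti (Set.mem_Icc.mpr ⟨le_rfl, hapos.le⟩)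
      (Set.mem_Icc.mpr ⟨hapos.le, le_rfl⟩) hapos
    rw [hha] at hlt
    linarith
  -- bounds relating h and the piecewise-linear envelope
  have hminLa : ∀ i < n, 0 ≤ co i - sl i * a := by
    intro i hi
    rcases eq_or_ne i (n-1) with rfl | hne'
    · rw [hcon1a]
    · linarith [hgapa i hi hne', hcon1a, hσpos]
  have hlse_a_le : Stmt11.lse n t sl co a ≤ 0 := by
    have := Stmt11.lse_le (n := n) (t := t) (m := sl) (c' := co) (x := a) hn0 ht
      (show n-1 < n by omega)
    linarith [hcon1a]
  have hlogn : Real.log n ≤ (n:ℝ) := by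
    have := Real.log_le_sub_one_of_pos hn0R
    linarith
  have htlogn : t * Real.log n ≤ t * n := mul_le_mul_of_nonneg_left hlogn ht.le
  have hlse_a_ge : -(t * (n:ℝ)) ≤ Stmt11.lse n t sl co a := by
    have h1 := Stmt11.le_lse (n := n) (t := t) (m := sl) (c' := co) (x := a) (v := 0) hn0 ht
      (fun i hi => by linarith [hminLa i hi])
    linarith
  have hh_lb : ∀ x : ℝ, 0 ≤ x → x ≤ a → Stmt11.lse n t sl co x ≤ h x := by
    intro x hx0 hxa
    simp only [hhdef]
    rw [hαdef]
    have hx2 : x^2 ≤ a^2 := pow_le_pow_left₀ hx0 hxa 2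
    have e1 : 0 ≤ (-β) * (a - x) := mul_nonneg (by linarith) (by linarith)
    have e2 : 0 ≤ (-γ) * (a^2 - x^2) := mul_nonneg (by linarith) (by linarith)
    linarith [hlse_a_le, e1, e2]
  set slack : ℝ := t * n + ι * a + ι * a / 2 with hslackdef
  have hslack0 : 0 ≤ slack := by
    rw [hslackdef]
    have p1 : 0 ≤ t * n := mul_nonneg ht.le hn0R.le
    have p2 : 0 ≤ ι * a := mul_nonneg hιpos.le hapos.le
    linarith
  have hslack5 : slack ≤ 5*(θ*B)/16 := by
    rw [hslackdef]
    linarith [htnθB, hιa]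
  clear_value slack
  have hgrid : σ + slack + Δ * (A+1) ≤ θ * B := by linarith [hσ2, hslack5, hΔA, hθBpos]
  have hh_ub : ∀ x : ℝ, 0 ≤ x → x ≤ a → h x ≤ Stmt11.lse n t sl co x + slack := by
    intro x hx0 hxa
    simp only [hhdef]
    rw [hαdef, hslackdef]
    have hx2 : x^2 ≤ a^2 := pow_le_pow_left₀ hx0 hxa 2
    have g1 : (-β) * (a - x) ≤ ι * a :=
      mul_le_mul (by linarith [hβlb]) (by linarith) (by linarith) hιpos.le
    have hγ2a : (-γ) * (2*a) ≤ ι := by linarith [hγa, hragt]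
    have s1 : (-γ)*(a^2 - x^2) ≤ (-γ)*a^2 :=
      mul_le_mul_of_nonneg_left (by linarith [sq_nonneg x]) (by linarith)
    have s2 : (-γ)*a^2 = ((-γ)*(2*a))*(a/2) := by ring
    have s3 := mul_le_mul_of_nonneg_right hγ2a (by linarith : (0:ℝ) ≤ a/2)
    have g2 : (-γ)*(a^2 - x^2) ≤ ι * a / 2 := by
      rw [s2] at s1
      calc (-γ)*(a^2 - x^2) ≤ ((-γ)*(2*a))*(a/2) := s1
        _ ≤ ι * (a/2) := s3
        _ = ι * a / 2 := by ring
    linarith [g1, g2, hlse_a_ge]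
  -- conclusion
  refine ⟨a, h 0, h, hapos, hb, hcont, rfl, hha, hanti, hconc, ?_, ?_, ?_, ?_, ?_, ?_⟩
  · rw [hderiv0]
    have hκν8 : κ ≤ ν/8 := by
      have := min_le_left ν 1
      linarith [hκν]
    linarith [hr0gt, hr0ub, hμν, hιν]
  · rw [hderiv0]; exact hr0neg
  · rw [hderiva]
    have hκ8 : κ ≤ 1/8 := by
      have := min_le_right ν 1
      linarith [hκν]
    linarith [hralt, hralb, hβneg, hMν, hκ8]
  · rw [hderiv0]; exact hr0irr
  · rw [hderiva]; exact hrairr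
  · apply Metric.hausdorffDist_le_of_mem_dist hε.le
    · -- Ω ⊆ nbhd region
      intro z hz
      have hzK : z ∈ K := hΩK hz
      have hz1 : 0 ≤ z.1 := (hquad z hz).1
      have hz2 : 0 ≤ z.2 := (hquad z hz).2
      have hz1a : z.1 ≤ a := le_trans (hAmax z hzK) hAa
      have hzc : ∀ i < n, z.2 ≤ co i - sl i * z.1 := by
        intro i hi
        have h1 := Stmt11.le_cf (m := sl i) hKcomp hzK
        linarith [hco_lb i]
      have hlb := Stmt11.le_lse (n := n) (t := t) (m := sl) (c' := co) (x := z.1) (v := z.2)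
        hn0 ht hzc
      have hhz : z.2 - t*n ≤ h z.1 := by
        have := hh_lb z.1 hz1 hz1a
        linarith [htlogn]
      have hh0 : 0 ≤ h z.1 := by
        rcases eq_or_lt_of_le hz1a with heq | hlt
        · rw [heq, hha]
        · have := hanti (Set.mem_Icc.mpr ⟨hz1, hz1a⟩) (Set.mem_Icc.mpr ⟨hapos.le, le_rfl⟩) hlt
          rw [hha] at this
          linarith
      have htn0 : 0 ≤ t*n := mul_nonneg ht.le hn0R.le
      have htnee : t*n ≤ ε := by linarith [htnε, hε'ε]
      refine ⟨(z.1, max (z.2 - t*n) 0), ⟨hz1, hz1a, le_max_right _ _, max_le hhz hh0⟩, ?_⟩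
      rw [Prod.dist_eq]
      apply max_le
      · rw [dist_self]
        exact hε.le
      · rw [Real.dist_eq, abs_le]
        rcases le_total (z.2 - t*n) 0 with hc | hc
        · rw [max_eq_right hc]
          constructor <;> simp only <;> linarith
        · rw [max_eq_left hc]
          constructor <;> simp only <;> linarith
    · -- region ⊆ nbhd Ω
      intro z hz
      obtain ⟨hz1, hz1a, hz2, hz2h⟩ := hz
      have hzub : ∀ i < n, sl i * z.1 + z.2 ≤ Stmt11.cf K (sl i) + σ + slack := by
        intro i hi
        have h1 := Stmt11.lse_le (n := n) (t := t) (m := sl) (c' := co) (x := z.1) hn0 ht hi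
        have h2 := hh_ub z.1 hz1 hz1a
        linarith [hco_ub i]
      set x' : ℝ := min z.1 A with hx'def
      set y' : ℝ := min z.2 B with hy'def
      have hx'0 : 0 ≤ x' := le_min hz1 hA0
      have hy'0 : 0 ≤ y' := le_min hz2 hB0
      have hx'A : x' ≤ A := min_le_right _ _
      have hy'B : y' ≤ B := min_le_right _ _
      have hx'z : x' ≤ z.1 := min_le_left _ _
      have hy'z : y' ≤ z.2 := min_le_left _ _
      clear_value x' y'
      have hθ1 : θ ≤ 1 := by linarith [hθ8]
      have hw'K : ((1-θ) * x', (1-θ) * y') ∈ K := by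
        apply Stmt11.mem_of_constraints hKconv hKcomp hKne hKquad hKdown
        · exact mul_nonneg (by linarith) hx'0
        · exact mul_nonneg (by linarith) hy'0
        · refine ⟨((A:ℝ), (0:ℝ)), hA0K, ?_⟩
          show (1-θ) * x' ≤ A
          have h1 : (1-θ)*x' ≤ 1*x' := mul_le_mul_of_nonneg_right (by linarith) hx'0
          linarith
        · intro m hm
          show m * ((1-θ)*x') + (1-θ)*y' ≤ Stmt11.cf K m
          have key : m * ((1-θ)*x') + (1-θ)*y' = (1-θ)*(m*x' + y') := by ring
          rcases le_or_gt m μ with hmμ | hmμ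
          · have h1 : m * x' + y' ≤ μ*A + B := by
              have := mul_le_mul hmμ hx'A hx'0 hμpos.le
              linarith
            have h2 := hcfB m hm
            have h3 := mul_le_mul_of_nonneg_left h1 (show (0:ℝ) ≤ 1-θ by linarith)
            have h4 : 0 ≤ θ*(μ*A) := mul_nonneg hθ.le (mul_nonneg hμpos.le hA0)
            rw [key]
            linarith [h3, hμA, h4, h2]
          · rcases le_or_gt M m with hmM' | hmM'
            · have h1 : m*x' + y' ≤ m*A + B := by
                have := mul_le_mul_of_nonneg_left hx'A hm
                linarith
              have h2 := hcfAe m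
              have h3 := mul_le_mul_of_nonneg_left h1 (show (0:ℝ) ≤ 1-θ by linarith)
              have h4 : θ*(M*e) ≤ θ*(m*A) := by
                apply mul_le_mul_of_nonneg_left ?_ hθ.le
                exact mul_le_mul hmM' heA he.le (by linarith [hMpos])
              have h5 : 0 ≤ θ*B := hθBpos.le
              rw [key]
              linarith [hMB, h3, h4, h5, h2]
            · set i : ℕ := ⌊(m - μ)/Δ⌋₊ with hidef
              have hge : 0 ≤ (m - μ)/Δ := div_nonneg (by linarith) hΔ.le
              have hilt : i < n - 1 := by
                rw [hidef, Nat.floor_lt hge, div_lt_iff₀ hΔ]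
                linarith [hMeq]
              have hin : i < n := by omega
              have hsl_le : sl i ≤ m := by
                have h1 := Nat.floor_le hge
                rw [← hidef] at h1
                have h2 := mul_le_mul_of_nonneg_right h1 hΔ.le
                rw [div_mul_cancel₀ _ hΔ.ne'] at h2
                rw [hsldef]
                simp only
                linarith
              have hm_ub : m ≤ sl i + Δ := by
                have h1 := Nat.lt_floor_add_one ((m-μ)/Δ)
                rw [← hidef, div_lt_iff₀ hΔ] at h1
                rw [hsldef]
                simp only
                push_cast at h1 ⊢
                linarith
              have hz2i := hzub i hin
              have e1 : sl i * x' + y' ≤ sl i * z.1 + z.2 := by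
                have := mul_le_mul_of_nonneg_left hx'z (hslpos i).le
                linarith
              have e2 : (m - sl i) * x' ≤ Δ * (A+1) := by
                apply mul_le_mul (by linarith) (by linarith) hx'0 hΔ.le
              have key2 : m * x' + y' ≤ Stmt11.cf K (sl i) + σ + slack + Δ*(A+1) := by
                have hsplit : m * x' + y' = sl i * x' + y' + (m - sl i)*x' := by ring
                linarith [e1, e2, hz2i]
              have hcfi : B ≤ Stmt11.cf K (sl i) := hcfB _ (hslpos i).le
              have hmono := hcfmono (sl i) m hsl_le
              have e3 := mul_le_mul_of_nonneg_left key2 (show (0:ℝ) ≤ 1-θ by linarith)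
              have e4 : 0 ≤ σ + slack + Δ*(A+1) := by
                have := mul_nonneg hΔ.le (show (0:ℝ) ≤ A+1 by linarith)
                linarith [hσpos, hslack0]
              have e5 := mul_le_mul_of_nonneg_left hcfi hθ.le
              have e6 := mul_nonneg hθ.le e4
              rw [key]
              linarith [e3, hgrid, e5, e6, hmono]
      obtain ⟨w, hwΩ, hwd⟩ := hKclose _ hw'K
      refine ⟨w, hwΩ, ?_⟩
      have hd1 : dist z ((1-θ)*x', (1-θ)*y') ≤ ε' / 2 := by
        rw [Prod.dist_eq]
        apply max_le
        · rw [Real.dist_eq, abs_le]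
          have hup : z.1 - x' ≤ (B+σ)/M := by
            rcases le_total z.1 A with hc | hc
            · rw [hx'def, min_eq_left hc]
              have : (0:ℝ) ≤ (B+σ)/M := div_nonneg (by linarith [hσpos]) hMpos.le
              linarith
            · rw [hx'def, min_eq_right hc]
              linarith [haAub]
          have hθx' : θ * x' ≤ θ * A := mul_le_mul_of_nonneg_left hx'A hθ.le
          have hθx'0 : 0 ≤ θ * x' := mul_nonneg hθ.le hx'0
          constructor <;> simp only <;> linarith [hBσM, hθA]
        · rw [Real.dist_eq, abs_le]
          have hz2B : z.2 ≤ B + (μ*A + σ + slack) := by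
            have h1 := hzub 0 hn0
            rw [hsl0] at h1
            have h2 := hcfUB μ hμpos.le
            have h3 : 0 ≤ μ * z.1 := mul_nonneg hμpos.le hz1
            linarith
          have hup : z.2 - y' ≤ μ*A + σ + slack := by
            rcases le_total z.2 B with hc | hc
            · rw [hy'def, min_eq_left hc]
              have p1 : 0 ≤ μ*A := mul_nonneg hμpos.le hA0
              linarith [hσpos, hslack0]
            · rw [hy'def, min_eq_right hc]
              linarith
          have hθy' : θ * y' ≤ θ * B := mul_le_mul_of_nonneg_left hy'B hθ.le
          have hθy'0 : 0 ≤ θ * y' := mul_nonneg hθ.le hy'0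
          constructor <;> simp only <;>
            linarith [hμA, hθB, hσ2, hslack5, hθBpos]
      calc dist z w ≤ dist z ((1-θ)*x', (1-θ)*y') + dist ((1-θ)*x', (1-θ)*y') w :=
            dist_triangle _ _ _
        _ ≤ ε'/2 + e := add_le_add hd1 hwd
        _ ≤ ε := by linarith [he8, hε'ε]
end

section
/- Fix an integer κ ≥ 1. Let Ē₊, H̄₊, Ē₋, H̄₋ be pairwise disjoint finite sets, let n : Ē₊ ∪ H̄₊ ∪ Ē₋ ∪ H̄₋ → ℤ_{≥1}, and for each t let K_t be a nonempty finite multiset of positive integers with Σ_{κ' ∈ K_t} κ' = κ. Define ind(C̄), ind(C), E₊, E₋ as in the index formula for formal covers. Assume in addition the Riemann–Hurwitz constraint Σ_{t} Σ_{κ' ∈ K_t} (κ' − 1) ≤ 2κ − 2postulated by the existence of the genus-zero branched cover. Then ind(C) ≥ κ·ind(C̄) − (κ·|Ē₊| − E₊) + (κ·|Ē₋| − E₋). -/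
open scoped BigOperators

private lemma aux_simp_set : True := trivial

private lemma aux_sum1 (s : Multiset ℕ) (c : ℤ) :
    (s.map (fun κ' => 2 * (κ' : ℤ) * c + 1)).sum = 2 * (s.sum : ℤ) * c + Multiset.card s := by
  induction s using Multiset.induction with
  | empty => simp
  | cons a t ih =>
    simp only [Multiset.cons_bind, Multiset.sum_cons, Multiset.card_cons, Nat.cast_add,
      Nat.cast_one, ih, Multiset.map_cons, Multiset.pure_def, Multiset.bind_def,
      Multiset.singleton_bind, Multiset.map_singleton, Multiset.sum_singleton,
      Multiset.singleton_add, Multiset.sum_map_singleton] at *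
    ring

private lemma aux_sum2 (s : Multiset ℕ) (c : ℤ) :
    (s.map (fun κ' => 2 * (κ' : ℤ) * c)).sum = 2 * (s.sum : ℤ) * c := by
  induction s using Multiset.induction with
  | empty => simp
  | cons a t ih =>
    simp only [Multiset.cons_bind, Multiset.sum_cons, Multiset.card_cons, Nat.cast_add,
      Nat.cast_one, ih, Multiset.map_cons, Multiset.pure_def, Multiset.bind_def,
      Multiset.singleton_bind, Multiset.map_singleton, Multiset.sum_singleton,
      Multiset.singleton_add, Multiset.sum_map_singleton] at *
    ring

private lemma aux_sum3 (s : Multiset ℕ) :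
    (s.map (fun κ' => (κ' : ℤ) - 1)).sum = (s.sum : ℤ) - Multiset.card s := by
  induction s using Multiset.induction with
  | empty => simp
  | cons a t ih =>
    simp only [Multiset.cons_bind, Multiset.sum_cons, Multiset.card_cons, Nat.cast_add,
      Nat.cast_one, ih, Multiset.map_cons, Multiset.pure_def, Multiset.bind_def,
      Multiset.singleton_bind, Multiset.map_singleton, Multiset.sum_singleton,
      Multiset.singleton_add, Multiset.sum_map_singleton] at *
    ring

/-- the index lower bound for `κ`-fold formal covers under the
Riemann–Hurwitz constraint, encoded arithmetically (notation as in the index formula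
for formal covers: ends of `C̄` indexed by `Ep, Hp, Em, Hm`, covering multiplicities
over end `t` given by the multiset `K t`). -/
theorem stmt_13 (κ : ℕ) (hκ : 1 ≤ κ)
    (Ep Hp Em Hm : Finset ℕ)
    (h1 : Disjoint Ep Hp) (h2 : Disjoint Ep Em) (h3 : Disjoint Ep Hm)
    (h4 : Disjoint Hp Em) (h5 : Disjoint Hp Hm) (h6 : Disjoint Em Hm)
    (n : ℕ → ℕ) (hn : ∀ t ∈ Ep ∪ Hp ∪ Em ∪ Hm, 1 ≤ n t)
    (K : ℕ → Multiset ℕ)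
    (hKne : ∀ t ∈ Ep ∪ Hp ∪ Em ∪ Hm, K t ≠ 0)
    (hKpos : ∀ t ∈ Ep ∪ Hp ∪ Em ∪ Hm, ∀ κ' ∈ K t, 1 ≤ κ')
    (hKsum : ∀ t ∈ Ep ∪ Hp ∪ Em ∪ Hm, (K t).sum = κ)
    (hRH : ∑ t ∈ Ep, ((K t).map (fun κ' => (κ' : ℤ) - 1)).sum
         + ∑ t ∈ Hp, ((K t).map (fun κ' => (κ' : ℤ) - 1)).sum
         + ∑ t ∈ Em, ((K t).map (fun κ' => (κ' : ℤ) - 1)).sum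
         + ∑ t ∈ Hm, ((K t).map (fun κ' => (κ' : ℤ) - 1)).sum ≤ 2 * (κ : ℤ) - 2)
    (indBar indC N EpC EmC : ℤ)
    (hindBar : indBar = ((Ep.card : ℤ) + Hp.card + Em.card + Hm.card) - 2
      + ∑ t ∈ Ep, (2 * (n t : ℤ) + 1) + ∑ t ∈ Hp, 2 * (n t : ℤ)
      - ∑ t ∈ Em, (2 * (n t : ℤ) + 1) - ∑ t ∈ Hm, 2 * (n t : ℤ))
    (hN : N = ∑ t ∈ Ep, ((K t).card : ℤ) + ∑ t ∈ Hp, ((K t).card : ℤ)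
      + ∑ t ∈ Em, ((K t).card : ℤ) + ∑ t ∈ Hm, ((K t).card : ℤ))
    (hEpC : EpC = ∑ t ∈ Ep, ((K t).card : ℤ))
    (hEmC : EmC = ∑ t ∈ Em, ((K t).card : ℤ))
    (hindC : indC = N - 2
      + ∑ t ∈ Ep, ((K t).map (fun κ' => 2 * (κ' : ℤ) * (n t : ℤ) + 1)).sum
      + ∑ t ∈ Hp, ((K t).map (fun κ' => 2 * (κ' : ℤ) * (n t : ℤ))).sum
      - ∑ t ∈ Em, ((K t).map (fun κ' => 2 * (κ' : ℤ) * (n t : ℤ) + 1)).sum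
      - ∑ t ∈ Hm, ((K t).map (fun κ' => 2 * (κ' : ℤ) * (n t : ℤ))).sum) :
    (κ : ℤ) * indBar - ((κ : ℤ) * Ep.card - EpC) + ((κ : ℤ) * Em.card - EmC)
      ≤ indC := by

  -- memberships
  have memEp : ∀ t ∈ Ep, t ∈ Ep ∪ Hp ∪ Em ∪ Hm := by
    intro t ht; simp [Finset.mem_union, ht]
  have memHp : ∀ t ∈ Hp, t ∈ Ep ∪ Hp ∪ Em ∪ Hm := by
    intro t ht; simp [Finset.mem_union, ht]
  have memEm : ∀ t ∈ Em, t ∈ Ep ∪ Hp ∪ Em ∪ Hm := by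
    intro t ht; simp [Finset.mem_union, ht]
  have memHm : ∀ t ∈ Hm, t ∈ Ep ∪ Hp ∪ Em ∪ Hm := by
    intro t ht; simp [Finset.mem_union, ht]
  -- rewrite the elliptic/hyperbolic CZ sums
  have hA1 : ∑ t ∈ Ep, ((K t).map (fun κ' => 2 * (κ' : ℤ) * (n t : ℤ) + 1)).sum
      = ∑ t ∈ Ep, (2 * (κ : ℤ) * (n t : ℤ) + ((K t).card : ℤ)) :=
    Finset.sum_congr rfl fun t ht => by
      rw [aux_sum1, hKsum t (memEp t ht)]
  have hA2 : ∑ t ∈ Hp, ((K t).map (fun κ' => 2 * (κ' : ℤ) * (n t : ℤ))).sum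
      = ∑ t ∈ Hp, (2 * (κ : ℤ) * (n t : ℤ)) :=
    Finset.sum_congr rfl fun t ht => by
      rw [aux_sum2, hKsum t (memHp t ht)]
  have hA3 : ∑ t ∈ Em, ((K t).map (fun κ' => 2 * (κ' : ℤ) * (n t : ℤ) + 1)).sum
      = ∑ t ∈ Em, (2 * (κ : ℤ) * (n t : ℤ) + ((K t).card : ℤ)) :=
    Finset.sum_congr rfl fun t ht => by
      rw [aux_sum1, hKsum t (memEm t ht)]
  have hA4 : ∑ t ∈ Hm, ((K t).map (fun κ' => 2 * (κ' : ℤ) * (n t : ℤ))).sum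
      = ∑ t ∈ Hm, (2 * (κ : ℤ) * (n t : ℤ)) :=
    Finset.sum_congr rfl fun t ht => by
      rw [aux_sum2, hKsum t (memHm t ht)]
  -- rewrite the Riemann–Hurwitz sums
  have hB1 : ∑ t ∈ Ep, ((K t).map (fun κ' => (κ' : ℤ) - 1)).sum
      = ∑ t ∈ Ep, ((κ : ℤ) - ((K t).card : ℤ)) :=
    Finset.sum_congr rfl fun t ht => by rw [aux_sum3, hKsum t (memEp t ht)]
  have hB2 : ∑ t ∈ Hp, ((K t).map (fun κ' => (κ' : ℤ) - 1)).sum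
      = ∑ t ∈ Hp, ((κ : ℤ) - ((K t).card : ℤ)) :=
    Finset.sum_congr rfl fun t ht => by rw [aux_sum3, hKsum t (memHp t ht)]
  have hB3 : ∑ t ∈ Em, ((K t).map (fun κ' => (κ' : ℤ) - 1)).sum
      = ∑ t ∈ Em, ((κ : ℤ) - ((K t).card : ℤ)) :=
    Finset.sum_congr rfl fun t ht => by rw [aux_sum3, hKsum t (memEm t ht)]
  have hB4 : ∑ t ∈ Hm, ((K t).map (fun κ' => (κ' : ℤ) - 1)).sum
      = ∑ t ∈ Hm, ((κ : ℤ) - ((K t).card : ℤ)) :=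
    Finset.sum_congr rfl fun t ht => by rw [aux_sum3, hKsum t (memHm t ht)]
  rw [hB1, hB2, hB3, hB4] at hRH
  simp only [Finset.sum_sub_distrib, Finset.sum_const, nsmul_eq_mul] at hRH
  -- expand the CZ sums
  have hC1 : ∑ t ∈ Ep, (2 * (κ : ℤ) * (n t : ℤ) + ((K t).card : ℤ))
      = 2 * (κ : ℤ) * ∑ t ∈ Ep, (n t : ℤ) + ∑ t ∈ Ep, ((K t).card : ℤ) := by
    rw [Finset.sum_add_distrib, Finset.mul_sum]
  have hC3 : ∑ t ∈ Em, (2 * (κ : ℤ) * (n t : ℤ) + ((K t).card : ℤ))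
      = 2 * (κ : ℤ) * ∑ t ∈ Em, (n t : ℤ) + ∑ t ∈ Em, ((K t).card : ℤ) := by
    rw [Finset.sum_add_distrib, Finset.mul_sum]
  have hC2 : ∑ t ∈ Hp, (2 * (κ : ℤ) * (n t : ℤ)) = 2 * (κ : ℤ) * ∑ t ∈ Hp, (n t : ℤ) :=
    (Finset.mul_sum _ _ _).symm
  have hC4 : ∑ t ∈ Hm, (2 * (κ : ℤ) * (n t : ℤ)) = 2 * (κ : ℤ) * ∑ t ∈ Hm, (n t : ℤ) :=
    (Finset.mul_sum _ _ _).symm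
  rw [hindC, hA1, hA2, hA3, hA4, hC1, hC2, hC3, hC4, hN, hEpC, hEmC]
  have hD1 : ∑ t ∈ Ep, (2 * (n t : ℤ) + 1) = 2 * ∑ t ∈ Ep, (n t : ℤ) + (Ep.card : ℤ) := by
    rw [Finset.sum_add_distrib, Finset.sum_const, ← Finset.mul_sum]; simp
  have hD3 : ∑ t ∈ Em, (2 * (n t : ℤ) + 1) = 2 * ∑ t ∈ Em, (n t : ℤ) + (Em.card : ℤ) := by
    rw [Finset.sum_add_distrib, Finset.sum_const, ← Finset.mul_sum]; simp
  have hD2 : ∑ t ∈ Hp, (2 * (n t : ℤ)) = 2 * ∑ t ∈ Hp, (n t : ℤ) := (Finset.mul_sum _ _ _).symm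
  have hD4 : ∑ t ∈ Hm, (2 * (n t : ℤ)) = 2 * ∑ t ∈ Hm, (n t : ℤ) := (Finset.mul_sum _ _ _).symm
  rw [hindBar, hD1, hD2, hD3, hD4]
  nlinarith [hRH]
end

section
/- Fix an integer κ ≥ 1. Let Ē₊ and H̄₊ be disjoint finite sets, let n : Ē₊ ∪ H̄₊ → ℤ_{≥1}, and for each t let K_t be a nonempty finite multiset of positive integers with Σ_{κ' ∈ K_t} κ' = κ. Let m̄, m be positive integers and B a nonnegative integer satisfying: κ·m̄ ≥ m; (B+1)·m̄ ≥ m; B + 1 ≤ κ; and the Riemann–Hurwitz constraint Σ_{t} Σ_{κ' ∈ K_t} (κ' − 1) + B ≤ 2κ − 2. Define ind(C̄) := (|Ē₊| + |H̄₊|) − 2 + Σ_{t ∈ Ē₊}(2·n(t)+1) + Σ_{t ∈ H̄₊} 2·n(t) − 2m̄ and ind(C) := N − 2 + Σ_{t ∈ Ē₊} Σ_{κ' ∈ K_t}(2κ'·n(t)+1) + Σ_{t ∈ H̄₊} Σ_{κ' ∈ K_t} 2κ'·n(t) − 2m, where N := Σ_t |K_t|. Set B₊ₑ := κ·|Ē₊|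 − Σ_{t ∈ Ē₊}|K_t| and B₊ₕ := κ·|H̄₊| − Σ_{t ∈ H̄₊}|K_t|. Then ind(C) ≥ κ·ind(C̄) + max{(2κ − 2) − 2·B₊ₑ − B₊ₕ, B₊ₕ}. In particular, since B₊ₕ ≥ 0, ind(C) ≥ κ·ind(C̄). -/
open scoped BigOperators

/-- the index lower bound for `κ`-fold formal covers carrying a tangency
constraint (order `m` on the cover `C`, order `m̄` on the underlying curve `C̄`, with
`B + 1` the ramification order at the constraint point), encoded arithmetically; `C` and
`C̄` have only positive ends, indexed by `Ep` (elliptic) and `Hp` (hyperbolic). -/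
theorem stmt_14 (κ : ℕ) (hκ : 1 ≤ κ)
    (Ep Hp : Finset ℕ) (hd : Disjoint Ep Hp)
    (n : ℕ → ℕ) (hn : ∀ t ∈ Ep ∪ Hp, 1 ≤ n t)
    (K : ℕ → Multiset ℕ)
    (hKne : ∀ t ∈ Ep ∪ Hp, K t ≠ 0)
    (hKpos : ∀ t ∈ Ep ∪ Hp, ∀ κ' ∈ K t, 1 ≤ κ')
    (hKsum : ∀ t ∈ Ep ∪ Hp, (K t).sum = κ)
    (mbar m : ℕ) (hmbar : 1 ≤ mbar) (hm : 1 ≤ m) (B : ℕ)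
    (hcov : m ≤ κ * mbar) (hram : m ≤ (B + 1) * mbar) (hBκ : B + 1 ≤ κ)
    (hRH : ∑ t ∈ Ep, ((K t).map (fun κ' => (κ' : ℤ) - 1)).sum
         + ∑ t ∈ Hp, ((K t).map (fun κ' => (κ' : ℤ) - 1)).sum + (B : ℤ)
         ≤ 2 * (κ : ℤ) - 2)
    (indBar indC N Bpe Bph : ℤ)
    (hindBar : indBar = ((Ep.card : ℤ) + Hp.card) - 2
      + ∑ t ∈ Ep, (2 * (n t : ℤ) + 1) + ∑ t ∈ Hp, 2 * (n t : ℤ) - 2 * (mbar : ℤ))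
    (hN : N = ∑ t ∈ Ep, ((K t).card : ℤ) + ∑ t ∈ Hp, ((K t).card : ℤ))
    (hBpe : Bpe = (κ : ℤ) * Ep.card - ∑ t ∈ Ep, ((K t).card : ℤ))
    (hBph : Bph = (κ : ℤ) * Hp.card - ∑ t ∈ Hp, ((K t).card : ℤ))
    (hindC : indC = N - 2
      + ∑ t ∈ Ep, ((K t).map (fun κ' => 2 * (κ' : ℤ) * (n t : ℤ) + 1)).sum
      + ∑ t ∈ Hp, ((K t).map (fun κ' => 2 * (κ' : ℤ) * (n t : ℤ))).sum
      - 2 * (m : ℤ)) :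
    (κ : ℤ) * indBar + max ((2 * (κ : ℤ) - 2) - 2 * Bpe - Bph) Bph ≤ indC := by
  have key : ∀ (s : Multiset ℕ) (a b : ℤ),
      (Multiset.map (fun κ' : ℤ => a * κ' + b) (s.map (Nat.cast : ℕ → ℤ))).sum
        = a * (s.sum : ℤ) + b * (Multiset.card s) := by
    intro s a b
    induction s using Multiset.induction with
    | empty => simp
    | cons x s ih =>
      simp only [Multiset.map_cons, Multiset.sum_cons, Multiset.card_cons, ih]
      push_cast; ring
  have hcoe : ∀ t, ((K t : Multiset ℤ)) = (K t).map (Nat.cast : ℕ → ℤ) := fun t => by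
    simp [Multiset.bind_singleton]
  have hEsum : ∀ t ∈ Ep, ((K t).map (fun κ' => 2 * (κ' : ℤ) * (n t : ℤ) + 1)).sum
      = 2 * (κ : ℤ) * (n t : ℤ) + ((K t).card : ℤ) := by
    intro t ht
    have h1 : (fun κ' : ℤ => 2 * κ' * (n t : ℤ) + 1)
        = fun κ' : ℤ => (2 * (n t : ℤ)) * κ' + 1 := by funext x; ring
    rw [hcoe t, h1, key, hKsum t (Finset.mem_union_left _ ht)]; ring
  have hHsum : ∀ t ∈ Hp, ((K t).map (fun κ' => 2 * (κ' : ℤ) * (n t : ℤ))).sum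
      = 2 * (κ : ℤ) * (n t : ℤ) := by
    intro t ht
    have h1 : (fun κ' : ℤ => 2 * κ' * (n t : ℤ))
        = fun κ' : ℤ => (2 * (n t : ℤ)) * κ' + 0 := by funext x; ring
    rw [hcoe t, h1, key, hKsum t (Finset.mem_union_right _ ht)]; ring
  have hRHt : ∀ t ∈ Ep ∪ Hp, ((K t).map (fun κ' => (κ' : ℤ) - 1)).sum
      = (κ : ℤ) - ((K t).card : ℤ) := by
    intro t ht
    have h1 : (fun κ' : ℤ => κ' - 1) = fun κ' : ℤ => (1 : ℤ) * κ' + (-1) := by funext x; ring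
    rw [hcoe t, h1, key, hKsum t ht]; ring
  -- abbreviations for the sum atoms
  set SE := ∑ t ∈ Ep, ((K t).card : ℤ) with hSE
  set SH := ∑ t ∈ Hp, ((K t).card : ℤ) with hSH
  set SnE := ∑ t ∈ Ep, (n t : ℤ) with hSnE
  set SnH := ∑ t ∈ Hp, (n t : ℤ) with hSnH
  -- rewrite Riemann–Hurwitz
  have hRH' : ((κ : ℤ) * Ep.card - SE) + ((κ : ℤ) * Hp.card - SH) + B ≤ 2 * κ - 2 := by
    have h1 : ∑ t ∈ Ep, ((K t).map (fun κ' => (κ' : ℤ) - 1)).sum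
        = (κ : ℤ) * Ep.card - SE := by
      rw [Finset.sum_congr rfl (fun t ht => hRHt t (Finset.mem_union_left _ ht)),
        Finset.sum_sub_distrib, Finset.sum_const, hSE, nsmul_eq_mul]; ring
    have h2 : ∑ t ∈ Hp, ((K t).map (fun κ' => (κ' : ℤ) - 1)).sum
        = (κ : ℤ) * Hp.card - SH := by
      rw [Finset.sum_congr rfl (fun t ht => hRHt t (Finset.mem_union_right _ ht)),
        Finset.sum_sub_distrib, Finset.sum_const, hSH, nsmul_eq_mul]; ring
    rw [h1, h2] at hRH; exact hRH
  -- rewrite indC and indBar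
  have hC : indC = SE + SH - 2 + (2 * (κ : ℤ) * SnE + SE) + 2 * (κ : ℤ) * SnH - 2 * m := by
    rw [hindC, hN, Finset.sum_congr rfl hEsum, Finset.sum_congr rfl hHsum,
      Finset.sum_add_distrib, ← Finset.mul_sum, ← Finset.mul_sum]
  have hB : indBar = ((Ep.card : ℤ) + Hp.card) - 2 + (2 * SnE + Ep.card) + 2 * SnH
      - 2 * mbar := by
    rw [hindBar, Finset.sum_add_distrib, Finset.sum_const, ← Finset.mul_sum,
      ← Finset.mul_sum, nsmul_eq_mul, mul_one]
  have hdiff : indC = (κ : ℤ) * indBar + ((2 * (κ : ℤ) - 2) - 2 * Bpe - Bph)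
      + 2 * ((κ : ℤ) * mbar - m) := by
    rw [hC, hB, hBpe, hBph]; ring
  -- arithmetic facts
  have hcov' : (m : ℤ) ≤ (κ : ℤ) * mbar := by exact_mod_cast hcov
  have hram' : (m : ℤ) ≤ ((B : ℤ) + 1) * mbar := by exact_mod_cast hram
  have hBκ' : (B : ℤ) + 1 ≤ (κ : ℤ) := by exact_mod_cast hBκ
  have hmbar' : (1 : ℤ) ≤ (mbar : ℤ) := by exact_mod_cast hmbar
  have hgap : (0 : ℤ) ≤ ((κ : ℤ) - B - 1) * ((mbar : ℤ) - 1) :=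
    mul_nonneg (by linarith) (by linarith)
  have h2 : Bpe + Bph + B ≤ 2 * (κ : ℤ) - 2 := by
    rw [hBpe, hBph]; linarith [hRH']
  have h3 : (κ : ℤ) - B - 1 ≤ (κ : ℤ) * mbar - m := by nlinarith [hgap, hram']
  rcases max_choice ((2 * (κ : ℤ) - 2) - 2 * Bpe - Bph) Bph with h | h <;> rw [h]
  · linarith [hdiff, hcov']
  · linarith [hdiff, h2, h3]
end

section
/- Let a, b, ε be real numbers with a > 1, b > a + 1/2, and 0 < ε < 1/2, and let Ω be the convex hull of the five points (0,0), (0,1), (a,1), (b, 1/2 + ε), (b, 0) in ℝ². Then for all positive integers k and ℓ with ℓ < a, one has G_k^ℓ(Ω) = k. -/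
open scoped BigOperators

/-- for the pentagon with vertices `(0,0), (0,1), (a,1), (b,1/2+ε),
(b,0)` (with `a > 1`, `b > a + 1/2`, `0 < ε < 1/2`), the capacities `G_k^ℓ` with
`ℓ < a` equal `k`: they give no obstruction beyond the Gutt–Hutchings ones. -/
theorem stmt_16 (a b ε : ℝ) (ha : 1 < a) (hb : a + 1 / 2 < b)
    (hε0 : 0 < ε) (hε : ε < 1 / 2)
    (Ω : Set (ℝ × ℝ))
    (hΩ : Ω = convexHull ℝ
      {((0 : ℝ), (0 : ℝ)), (0, 1), (a, 1), (b, 1 / 2 + ε), (b, 0)})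
    (k ℓ : ℕ) (hk : 1 ≤ k) (hℓ : 1 ≤ ℓ) (hℓa : (ℓ : ℝ) < a) :
    Gcap Ω k (ℓ : ℕ∞) = k := by
  subst hΩ
  set S : Set (ℝ × ℝ) := {((0 : ℝ), (0 : ℝ)), (0, 1), (a, 1), (b, 1 / 2 + ε), (b, 0)} with hS
  set Ω : Set (ℝ × ℝ) := convexHull ℝ S with hΩ
  have hSfin : S.Finite := by
    simp only [hS]
    exact Set.toFinite _
  have hcomp : IsCompact Ω := hSfin.isCompact_convexHull (𝕜 := ℝ)
  have ha1 : ((a, 1) : ℝ × ℝ) ∈ Ω := subset_convexHull ℝ S (by simp [hS])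
  have h01 : ((0, 1) : ℝ × ℝ) ∈ Ω := subset_convexHull ℝ S (by simp [hS])
  have hne : Ω.Nonempty := ⟨_, h01⟩
  have hy1 : ∀ w ∈ Ω, w.2 ≤ 1 := by
    have hsub : Ω ⊆ {p : ℝ × ℝ | p.2 ≤ 1} := by
      apply convexHull_min
      · intro p hp
        simp only [hS, Set.mem_insert_iff, Set.mem_singleton_iff] at hp
        rcases hp with h | h | h | h | h <;> subst h <;> simp <;> linarith
      · exact (convex_Iic (1 : ℝ)).linear_preimage (LinearMap.snd ℝ ℝ ℝ)
    exact fun w hw => hsub hw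
  have hbdd : ∀ v : ℝ × ℝ, BddAbove ((fun w : ℝ × ℝ => v.1 * w.1 + v.2 * w.2) '' Ω) := by
    intro v
    exact (hcomp.image (by fun_prop)).bddAbove
  have hlowpair : ∀ p : ℕ × ℕ, a * p.1 + p.2 ≤ pairNorm Ω p := by
    intro p
    have h := le_csSup (hbdd ((p.1 : ℝ), (p.2 : ℝ))) ⟨(a, 1), ha1, rfl⟩
    simp only [pairNorm, dualNorm]
    calc a * (p.1 : ℝ) + p.2 = (p.1 : ℝ) * a + (p.2 : ℝ) * 1 := by ring
    _ ≤ _ := h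
  have hval : pairNorm Ω (0, k) = k := by
    apply le_antisymm
    · apply csSup_le (hne.image _)
      rintro x ⟨w, hw, rfl⟩
      have h2 := hy1 w hw
      have hk0 : (0 : ℝ) ≤ (k : ℝ) := by positivity
      simp only [Nat.cast_zero, zero_mul, zero_add]
      nlinarith
    · have h := hlowpair (0, k)
      simpa using h
  have hmem : (k : ℝ) ∈ totalNorm Ω '' {P | Admissible k (ℓ : ℕ∞) P} := by
    refine ⟨{(0, k)}, ⟨?_, ?_, ?_, ?_⟩, ?_⟩
    · intro p hp
      simp only [Multiset.mem_singleton] at hp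
      subst hp
      simp only [ne_eq, Prod.mk.injEq, not_and]
      intro _; omega
    · simp
    · intro h
      simp at h
    · simpa using (Nat.cast_le.mpr hℓ : ((1 : ℕ) : ℕ∞) ≤ (ℓ : ℕ∞))
    · simp [totalNorm, hval]
  have hlb : ∀ x ∈ totalNorm Ω '' {P | Admissible k (ℓ : ℕ∞) P}, (k : ℝ) ≤ x := by
    rintro x ⟨P, hP, rfl⟩
    obtain ⟨h0, hidx, hperm, hlen⟩ := hP
    set q := Multiset.card P with hq
    set I := (P.map (fun p => p.1)).sum with hI
    set J := (P.map (fun p => p.2)).sum with hJ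
    have hsplit : (P.map (fun p : ℕ × ℕ => p.1 + p.2)).sum = I + J := by
      rw [hI, hJ, ← Multiset.sum_map_add]
    have hIJ : I + J + q = k + 1 := by rw [← hsplit]; exact hidx
    have hqℓ : q ≤ ℓ := by exact_mod_cast hlen
    have hstep : (P.map (fun p : ℕ × ℕ => a * p.1 + p.2)).sum ≤ totalNorm Ω P := by
      apply Multiset.sum_map_le_sum_map
      intro p _
      exact hlowpair p
    have hsum : (P.map (fun p : ℕ × ℕ => a * p.1 + p.2)).sum = a * I + J := by
      rw [Multiset.sum_map_add, Multiset.sum_map_mul_left]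
      congr 1
      · congr 1
        rw [hI]
        rw [Nat.cast_multiset_sum, Multiset.map_map]
        rfl
      · rw [hJ, Nat.cast_multiset_sum, Multiset.map_map]
        rfl
    rw [hsum] at hstep
    have hIJ' : (I : ℝ) + J + q = k + 1 := by exact_mod_cast hIJ
    rcases le_or_gt 2 q with h2 | h2
    · obtain ⟨⟨p, hp, hp1⟩, -⟩ := hperm h2
      have hpI : p.1 ≤ I := by
        apply Multiset.single_le_sum (fun x _ => Nat.zero_le x)
        exact Multiset.mem_map_of_mem _ hp
      have hI1 : (1 : ℝ) ≤ (I : ℝ) := by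
        have : 1 ≤ I := le_trans (Nat.one_le_iff_ne_zero.mpr hp1) hpI
        exact_mod_cast this
      have hqa : (q : ℝ) < a := lt_of_le_of_lt (by exact_mod_cast hqℓ) hℓa
      nlinarith [mul_le_mul_of_nonneg_left hI1 (by linarith : (0 : ℝ) ≤ a - 1)]
    · have hq1 : (q : ℝ) ≤ 1 := by exact_mod_cast Nat.lt_succ_iff.mp h2
      have hI0 : (0 : ℝ) ≤ (I : ℝ) := Nat.cast_nonneg _
      nlinarith
  exact le_antisymm (csInf_le ⟨(k : ℝ), hlb⟩ hmem) (le_csInf ⟨_, hmem⟩ hlb)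
end

section
/- Let Ω be the convex hull of the five points (0,0), (0,1), (1,1), (2, 1/2), (2,0) in ℝ². Then for every positive integer k, G_k^∞(Ω) = min{k, (k+3)/2}. -/
open scoped BigOperators

/-- The explicit formula for the pentagon norm of a pair of naturals. -/
noncomputable def pN (p : ℕ × ℕ) : ℝ :=
  max ((p.1 : ℝ) + p.2) (2 * (p.1 : ℝ) + (p.2 : ℝ) / 2)

lemma dualNorm_pent (Ω : Set (ℝ × ℝ))
    (hΩ : Ω = convexHull ℝ
      {((0 : ℝ), (0 : ℝ)), (0, 1), (1, 1), (2, 1 / 2), (2, 0)})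
    (a b : ℝ) (ha : 0 ≤ a) (hb : 0 ≤ b) :
    dualNorm Ω (a, b) = max (a + b) (2 * a + b / 2) := by
  subst hΩ
  set S : Set (ℝ × ℝ) := {((0 : ℝ), (0 : ℝ)), (0, 1), (1, 1), (2, 1 / 2), (2, 0)} with hS
  set M := max (a + b) (2 * a + b / 2) with hM
  have h1 : a + b ≤ M := le_max_left _ _
  have h2 : 2 * a + b / 2 ≤ M := le_max_right _ _
  have hub : ∀ w ∈ convexHull ℝ S, a * w.1 + b * w.2 ≤ M := by
    intro w hw
    have hlin : IsLinearMap ℝ (fun w : ℝ × ℝ => a * w.1 + b * w.2) := by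
      constructor
      · intro x y; simp only [Prod.fst_add, Prod.snd_add]; ring
      · intro c x; simp only [Prod.smul_fst, Prod.smul_snd, smul_eq_mul]; ring
    have hconv : Convex ℝ {w : ℝ × ℝ | a * w.1 + b * w.2 ≤ M} :=
      convex_halfSpace_le hlin M
    have hsub : S ⊆ {w : ℝ × ℝ | a * w.1 + b * w.2 ≤ M} := by
      intro w hw
      simp only [hS, Set.mem_insert_iff, Set.mem_singleton_iff] at hw
      rcases hw with rfl | rfl | rfl | rfl | rfl <;>
        simp only [Set.mem_setOf_eq] <;> norm_num <;> linarith
    exact convexHull_min hsub hconv hw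
  have hmem11 : ((1 : ℝ), (1 : ℝ)) ∈ convexHull ℝ S :=
    subset_convexHull ℝ S (by simp [hS])
  have hmem2 : ((2 : ℝ), (1 / 2 : ℝ)) ∈ convexHull ℝ S :=
    subset_convexHull ℝ S (by simp [hS])
  have hbdd : BddAbove ((fun w : ℝ × ℝ => a * w.1 + b * w.2) '' convexHull ℝ S) := by
    refine ⟨M, ?_⟩
    rintro x ⟨w, hw, rfl⟩
    exact hub w hw
  unfold dualNorm
  simp only
  apply le_antisymm
  · refine csSup_le ⟨a * 1 + b * 1, (1, 1), hmem11, rfl⟩ ?_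
    rintro x ⟨w, hw, rfl⟩
    exact hub w hw
  · rcases le_total (a + b) (2 * a + b / 2) with h | h
    · have hMeq : M = 2 * a + b / 2 := max_eq_right h
      rw [hMeq]
      apply le_csSup hbdd
      exact ⟨(2, 1 / 2), hmem2, by norm_num; ring⟩
    · have hMeq : M = a + b := max_eq_left h
      rw [hMeq]
      apply le_csSup hbdd
      exact ⟨(1, 1), hmem11, by norm_num⟩

lemma pairNorm_pent (Ω : Set (ℝ × ℝ))
    (hΩ : Ω = convexHull ℝ
      {((0 : ℝ), (0 : ℝ)), (0, 1), (1, 1), (2, 1 / 2), (2, 0)})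
    (p : ℕ × ℕ) : pairNorm Ω p = pN p := by
  unfold pairNorm pN
  exact dualNorm_pent Ω hΩ _ _ (Nat.cast_nonneg _) (Nat.cast_nonneg _)

lemma totalNorm_pent (Ω : Set (ℝ × ℝ))
    (hΩ : Ω = convexHull ℝ
      {((0 : ℝ), (0 : ℝ)), (0, 1), (1, 1), (2, 1 / 2), (2, 0)})
    (P : Multiset (ℕ × ℕ)) : totalNorm Ω P = (P.map pN).sum := by
  unfold totalNorm
  congr 1
  exact Multiset.map_congr rfl (fun p _ => pairNorm_pent Ω hΩ p)

lemma sum_g (P : Multiset (ℕ × ℕ)) :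
    (P.map fun p : ℕ × ℕ => (((p.1 : ℝ) + p.2) / 2 + 1 / 2)).sum =
      (((P.map fun p => p.1 + p.2).sum : ℕ) + (Multiset.card P : ℝ)) / 2 := by
  induction P using Multiset.induction with
  | empty => simp
  | cons a s ih =>
    simp only [Multiset.map_cons, Multiset.sum_cons, Multiset.card_cons, ih]
    push_cast
    ring

lemma pN_ge_sum (p : ℕ × ℕ) : (p.1 : ℝ) + p.2 ≤ pN p := le_max_left _ _

lemma lb_lemma (k : ℕ) (hk : 1 ≤ k) (P : Multiset (ℕ × ℕ))
    (hP : Admissible k ⊤ P) :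
    min (k : ℝ) (((k : ℝ) + 3) / 2) ≤ (P.map pN).sum := by
  obtain ⟨h0, hidx, hperm, -⟩ := hP
  rcases Nat.lt_or_ge (Multiset.card P) 2 with hcard | hcard
  · interval_cases h : Multiset.card P
    · rw [Multiset.card_eq_zero] at h
      subst h
      simp at hidx
    · rw [Multiset.card_eq_one] at h
      obtain ⟨p, rfl⟩ := h
      simp only [Multiset.map_singleton, Multiset.sum_singleton] at hidx ⊢
      have hpk : p.1 + p.2 = k := by omega
      have := pN_ge_sum p
      have : (k : ℝ) ≤ pN p := by
        rw [← hpk]; push_cast at this ⊢; linarith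
      calc min (k : ℝ) (((k : ℝ) + 3) / 2) ≤ (k : ℝ) := min_le_left _ _
        _ ≤ pN p := this
  · -- q ≥ 2
    obtain ⟨⟨p₀, hp₀mem, hp₀⟩, -⟩ := hperm hcard
    obtain ⟨Q, rfl⟩ := Multiset.exists_cons_of_mem hp₀mem
    set g : ℕ × ℕ → ℝ := fun p => ((p.1 : ℝ) + p.2) / 2 + 1 / 2 with hg
    have hsum_ge : ((p₀ ::ₘ Q).map g).sum + 1 ≤ ((p₀ ::ₘ Q).map pN).sum := by
      simp only [Multiset.map_cons, Multiset.sum_cons]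
      have h1 : g p₀ + 1 ≤ pN p₀ := by
        have hi : (1 : ℝ) ≤ (p₀.1 : ℝ) := by
          exact_mod_cast Nat.one_le_iff_ne_zero.mpr hp₀
        have h2 : 2 * (p₀.1 : ℝ) + (p₀.2 : ℝ) / 2 ≤ pN p₀ := le_max_right _ _
        have hj : (0 : ℝ) ≤ (p₀.2 : ℝ) := Nat.cast_nonneg _
        simp only [hg]
        linarith
      have h2 : (Q.map g).sum ≤ (Q.map pN).sum := by
        apply Multiset.sum_map_le_sum_map
        intro p hp
        have hne : p ≠ (0, 0) := h0 p (Multiset.mem_cons_of_mem hp)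
        have hsum1 : 1 ≤ p.1 + p.2 := by
          rcases Nat.eq_zero_or_pos (p.1 + p.2) with h | h
          · exfalso; apply hne
            have := Nat.add_eq_zero.mp h
            exact Prod.ext this.1 this.2
          · exact h
        have hsum1' : (1 : ℝ) ≤ (p.1 : ℝ) + p.2 := by exact_mod_cast hsum1
        have := pN_ge_sum p
        simp only [hg]
        linarith
      linarith
    have hcast : ((((p₀ ::ₘ Q).map fun p => p.1 + p.2).sum : ℕ) : ℝ) +
        (Multiset.card (p₀ ::ₘ Q) : ℝ) = (k : ℝ) + 1 := by exact_mod_cast hidx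
    have hgsum : ((p₀ ::ₘ Q).map g).sum = ((k : ℝ) + 1) / 2 := by
      rw [hg, sum_g]
      linarith
    rw [hgsum] at hsum_ge
    calc min (k : ℝ) (((k : ℝ) + 3) / 2) ≤ ((k : ℝ) + 3) / 2 := min_le_right _ _
      _ = ((k : ℝ) + 1) / 2 + 1 := by ring
      _ ≤ _ := hsum_ge

lemma ub_lemma (k : ℕ) (hk : 1 ≤ k) :
    ∃ P : Multiset (ℕ × ℕ), Admissible k ⊤ P ∧
      (P.map pN).sum = min (k : ℝ) (((k : ℝ) + 3) / 2) := by
  by_cases hk3 : k ≤ 3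
  · refine ⟨{(0, k)}, ⟨?_, ?_, ?_, ?_⟩, ?_⟩
    · intro p hp
      simp only [Multiset.mem_singleton] at hp
      subst hp
      simp only [ne_eq, Prod.mk.injEq, not_and]
      intro _
      omega
    · simp
    · intro h; simp at h
    · exact le_top
    · have hmin : min (k : ℝ) (((k : ℝ) + 3) / 2) = (k : ℝ) := by
        apply min_eq_left
        have : (k : ℝ) ≤ 3 := by exact_mod_cast hk3
        linarith
      rw [hmin]
      simp only [Multiset.map_singleton, Multiset.sum_singleton, pN]
      rw [max_eq_left]
      · norm_num
      · have : (0 : ℝ) ≤ (k : ℝ) := Nat.cast_nonneg _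
        push_cast
        linarith
  · push_neg at hk3
    have hmin : min (k : ℝ) (((k : ℝ) + 3) / 2) = ((k : ℝ) + 3) / 2 := by
      apply min_eq_right
      have : (3 : ℝ) < (k : ℝ) := by exact_mod_cast hk3
      linarith
    rw [hmin]
    rcases Nat.even_or_odd k with ⟨m, hm⟩ | ⟨m, hm⟩
    · -- k = m + m, m ≥ 2; P = (1,1) ::ₘ replicate (m-1) (0,1)
      have hm2 : 2 ≤ m := by omega
      refine ⟨(1, 1) ::ₘ Multiset.replicate (m - 1) (0, 1), ⟨?_, ?_, ?_, ?_⟩, ?_⟩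
      · intro p hp
        rcases Multiset.mem_cons.mp hp with rfl | hp
        · simp
        · rw [Multiset.eq_of_mem_replicate hp]; simp
      · simp only [Multiset.map_cons, Multiset.map_replicate, Multiset.sum_cons,
          Multiset.sum_replicate, Multiset.card_cons, Multiset.card_replicate, smul_eq_mul]
        omega
      · intro _
        constructor
        · exact ⟨(1, 1), Multiset.mem_cons_self _ _, by simp⟩
        · exact ⟨(1, 1), Multiset.mem_cons_self _ _, by simp⟩
      · exact le_top
      · simp only [Multiset.map_cons, Multiset.map_replicate, Multiset.sum_cons,
          Multiset.sum_replicate, smul_eq_mul, pN]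
        have h1 : max ((1 : ℝ) + 1) (2 * 1 + 1 / 2) = 5 / 2 := by norm_num
        have h2 : max ((0 : ℝ) + 1) (2 * 0 + 1 / 2) = 1 := by norm_num
        simp only [Nat.cast_one, Nat.cast_zero]
        rw [h1, h2, nsmul_eq_mul, Nat.cast_sub (by omega : 1 ≤ m), hm]
        push_cast
        ring
    · -- k = 2m + 1, m ≥ 2; P = (1,0) ::ₘ replicate m (0,1)
      have hm2 : 2 ≤ m := by omega
      refine ⟨(1, 0) ::ₘ Multiset.replicate m (0, 1), ⟨?_, ?_, ?_, ?_⟩, ?_⟩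
      · intro p hp
        rcases Multiset.mem_cons.mp hp with rfl | hp
        · simp
        · rw [Multiset.eq_of_mem_replicate hp]; simp
      · simp only [Multiset.map_cons, Multiset.map_replicate, Multiset.sum_cons,
          Multiset.sum_replicate, Multiset.card_cons, Multiset.card_replicate, smul_eq_mul]
        omega
      · intro _
        constructor
        · exact ⟨(1, 0), Multiset.mem_cons_self _ _, by simp⟩
        · refine ⟨(0, 1), Multiset.mem_cons_of_mem ?_, by simp⟩
          rw [Multiset.mem_replicate]
          exact ⟨by omega, rfl⟩
      · exact le_top
      · simp only [Multiset.map_cons, Multiset.map_replicate, Multiset.sum_cons,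
          Multiset.sum_replicate, smul_eq_mul, pN]
        have h1 : max ((1 : ℝ) + 0) (2 * 1 + 0 / 2) = 2 := by norm_num
        have h2 : max ((0 : ℝ) + 1) (2 * 0 + 1 / 2) = 1 := by norm_num
        simp only [Nat.cast_one, Nat.cast_zero]
        rw [h1, h2, nsmul_eq_mul, hm]
        push_cast
        ring

/-- for the pentagon with vertices `(0,0), (0,1), (1,1), (2,1/2), (2,0)`,
the McDuff–Siegel value is `G_k^∞ = min{k, (k+3)/2}`. -/
theorem stmt_17 (Ω : Set (ℝ × ℝ))
    (hΩ : Ω = convexHull ℝ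
      {((0 : ℝ), (0 : ℝ)), (0, 1), (1, 1), (2, 1 / 2), (2, 0)})
    (k : ℕ) (hk : 1 ≤ k) :
    Gcap Ω k ⊤ = min (k : ℝ) (((k : ℝ) + 3) / 2) := by
  obtain ⟨P0, hP0, hval⟩ := ub_lemma k hk
  have hmemP0 : min (k : ℝ) (((k : ℝ) + 3) / 2) ∈ totalNorm Ω '' {P | Admissible k ⊤ P} :=
    ⟨P0, hP0, by rw [totalNorm_pent Ω hΩ]; exact hval⟩
  have hlb : ∀ x ∈ totalNorm Ω '' {P | Admissible k ⊤ P},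
      min (k : ℝ) (((k : ℝ) + 3) / 2) ≤ x := by
    rintro x ⟨P, hP, rfl⟩
    rw [totalNorm_pent Ω hΩ]
    exact lb_lemma k hk P hP
  unfold Gcap
  apply le_antisymm
  · exact csInf_le ⟨_, hlb⟩ hmemP0
  · exact le_csInf ⟨_, hmemP0⟩ hlb
end

section
/- Let Ω be the convex hull of the five points (0,0), (0,1), (1,1), (2, 1/2), (2,0) in ℝ², and let Ω' := [0, 11/10] × [0, 1]. Then G_5^2(Ω) = 4 and G_5^2(Ω') = 41/10; in particular G_5^2(Ω') > G_5^2(Ω). -/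
open scoped BigOperators

lemma pent_dual (i j : ℝ) (hi : 0 ≤ i) (hj : 0 ≤ j) :
    dualNorm (convexHull ℝ {((0:ℝ),(0:ℝ)), (0,1), (1,1), (2,1/2), (2,0)}) (i, j)
      = max (i + j) (2*i + j/2) := by
  apply IsGreatest.csSup_eq
  constructor
  · rcases le_total (2*i + j/2) (i + j) with h | h
    · exact ⟨(1,1), subset_convexHull ℝ _ (by simp), by simp [max_eq_left h]⟩
    · exact ⟨(2,1/2), subset_convexHull ℝ _ (by simp), by
        simp only [max_eq_right h]; ring⟩
  · rintro y ⟨w, hw, rfl⟩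
    have hlin : IsLinearMap ℝ (fun w : ℝ × ℝ => i * w.1 + j * w.2) := by
      constructor <;> intros <;> simp [Prod.fst_add, Prod.snd_add] <;> ring
    have hconv : Convex ℝ {w : ℝ × ℝ | i * w.1 + j * w.2 ≤ max (i+j) (2*i+j/2)} :=
      convex_halfSpace_le hlin _
    have hsub : convexHull ℝ {((0:ℝ),(0:ℝ)), (0,1), (1,1), (2,1/2), (2,0)} ⊆
        {w : ℝ × ℝ | i * w.1 + j * w.2 ≤ max (i+j) (2*i+j/2)} := by
      apply convexHull_min _ hconv
      intro p hp
      simp only [Set.mem_insert_iff, Set.mem_singleton_iff] at hp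
      rcases hp with rfl | rfl | rfl | rfl | rfl <;> simp only [Set.mem_setOf_eq]
      · have := le_max_left (i+j) (2*i+j/2); nlinarith
      · have := le_max_left (i+j) (2*i+j/2); nlinarith
      · have := le_max_left (i+j) (2*i+j/2); nlinarith
      · have := le_max_right (i+j) (2*i+j/2); nlinarith
      · have := le_max_right (i+j) (2*i+j/2); nlinarith
    exact hsub hw

lemma rect_dual (i j : ℝ) (hi : 0 ≤ i) (hj : 0 ≤ j) :
    dualNorm (Set.Icc ((0:ℝ),(0:ℝ)) (11/10, 1)) (i, j) = 11/10 * i + j := by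
  apply IsGreatest.csSup_eq
  constructor
  · exact ⟨(11/10, 1), by constructor <;> constructor <;> norm_num, by push_cast; ring⟩
  · rintro y ⟨w, hw, rfl⟩
    obtain ⟨⟨h1, h2⟩, h3, h4⟩ := hw
    simp only
    have := mul_le_mul_of_nonneg_left h3 hi
    have := mul_le_mul_of_nonneg_left h4 hj
    nlinarith

lemma pent_pairNorm (p : ℕ × ℕ) :
    pairNorm (convexHull ℝ {((0:ℝ),(0:ℝ)), (0,1), (1,1), (2,1/2), (2,0)}) p
      = max ((p.1:ℝ) + p.2) (2*p.1 + p.2/2) :=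
  pent_dual _ _ (Nat.cast_nonneg _) (Nat.cast_nonneg _)

lemma rect_pairNorm (p : ℕ × ℕ) :
    pairNorm (Set.Icc ((0:ℝ),(0:ℝ)) (11/10, 1)) p = 11/10 * p.1 + p.2 :=
  rect_dual _ _ (Nat.cast_nonneg _) (Nat.cast_nonneg _)

lemma adm_P0 : Admissible 5 2 ({(0,1), (1,2)} : Multiset (ℕ × ℕ)) := by
  refine ⟨by decide, by decide, fun _ => ⟨⟨(1,2), by simp, by simp⟩, ⟨(0,1), by simp, by simp⟩⟩, by simp⟩

lemma cast_degsum (P : Multiset (ℕ × ℕ)) :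
    (((P.map fun p => p.1 + p.2).sum : ℕ) : ℝ)
      = (P.map fun p => ((p.1:ℝ) + p.2)).sum := by
  induction P using Multiset.induction with
  | empty => simp
  | cons a s ih => simp [ih]

lemma cast_isum (P : Multiset (ℕ × ℕ)) :
    (((P.map fun p => p.1).sum : ℕ) : ℝ) = (P.map fun p => ((p.1:ℝ))).sum := by
  induction P using Multiset.induction with
  | empty => simp
  | cons a s ih => simp [ih]

/-- `G_5^2` of the pentagon with vertices `(0,0), (0,1), (1,1), (2,1/2),
(2,0)` equals `4`, while `G_5^2` of the rectangle `[0, 1.1] × [0,1]` (the moment image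
of `P(1.1, 1)`) equals `4.1 = 41/10`; in particular the latter is strictly larger. -/
theorem stmt_18 (Ω Ω' : Set (ℝ × ℝ))
    (hΩ : Ω = convexHull ℝ
      {((0 : ℝ), (0 : ℝ)), (0, 1), (1, 1), (2, 1 / 2), (2, 0)})
    (hΩ' : Ω' = Set.Icc ((0 : ℝ), (0 : ℝ)) (11 / 10, 1)) :
    Gcap Ω 5 2 = 4 ∧ Gcap Ω' 5 2 = 41 / 10 ∧ Gcap Ω 5 2 < Gcap Ω' 5 2 := by
  subst hΩ hΩ'
  have h1 : Gcap (convexHull ℝ {((0:ℝ),(0:ℝ)), (0,1), (1,1), (2,1/2), (2,0)}) 5 2 = 4 := by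
    apply IsLeast.csInf_eq
    constructor
    · refine ⟨{(0,1),(1,2)}, adm_P0, ?_⟩
      show (Multiset.map _ _).sum = _
      rw [show ({(0,1),(1,2)} : Multiset (ℕ × ℕ)) = (0,1) ::ₘ (1,2) ::ₘ 0 from rfl]
      simp only [Multiset.map_cons, Multiset.map_zero, Multiset.sum_cons,
        Multiset.sum_zero, pent_pairNorm]
      norm_num
    · rintro x ⟨P, ⟨hne, hidx, hperm, hlen⟩, rfl⟩
      have hcard : Multiset.card P ≤ 2 := by exact_mod_cast hlen
      have hdeg : 4 ≤ (P.map fun p => p.1 + p.2).sum := by omega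
      have step : ((P.map fun p => ((p.1:ℝ) + p.2)).sum) ≤ totalNorm (convexHull ℝ {((0:ℝ),(0:ℝ)), (0,1), (1,1), (2,1/2), (2,0)}) P := by
        apply Multiset.sum_map_le_sum_map
        intro p _
        rw [pent_pairNorm]
        exact le_max_left _ _
      have : (4:ℝ) ≤ (P.map fun p => ((p.1:ℝ) + p.2)).sum := by
        rw [← cast_degsum]; exact_mod_cast hdeg
      linarith
  have h2 : Gcap (Set.Icc ((0:ℝ),(0:ℝ)) (11/10, 1)) 5 2 = 41/10 := by
    apply IsLeast.csInf_eq
    constructor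
    · refine ⟨{(0,1),(1,2)}, adm_P0, ?_⟩
      show (Multiset.map _ _).sum = _
      rw [show ({(0,1),(1,2)} : Multiset (ℕ × ℕ)) = (0,1) ::ₘ (1,2) ::ₘ 0 from rfl]
      simp only [Multiset.map_cons, Multiset.map_zero, Multiset.sum_cons,
        Multiset.sum_zero, rect_pairNorm]
      norm_num
    · rintro x ⟨P, ⟨hne, hidx, hperm, hlen⟩, rfl⟩
      have hcard : Multiset.card P ≤ 2 := by exact_mod_cast hlen
      have htot : totalNorm (Set.Icc ((0:ℝ),(0:ℝ)) (11/10, 1)) P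
          = (P.map fun p => ((p.1:ℝ) + p.2)).sum + (1/10) * (P.map fun p => ((p.1:ℝ))).sum := by
        show (Multiset.map _ _).sum = _
        simp only [rect_pairNorm]
        rw [← Multiset.sum_map_mul_left]
        rw [← Multiset.sum_map_add]
        congr 1
        apply Multiset.map_congr rfl
        intro p _
        ring
      have hisum_nonneg : (0:ℝ) ≤ (P.map fun p => ((p.1:ℝ))).sum := by
        apply Multiset.sum_nonneg
        intro x hx
        obtain ⟨p, _, rfl⟩ := Multiset.mem_map.mp hx
        positivity
      rcases Nat.lt_or_ge (Multiset.card P) 2 with hc | hc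
      · -- card ≤ 1, so degree sum ≥ 5
        have hdeg : 5 ≤ (P.map fun p => p.1 + p.2).sum := by omega
        have : (5:ℝ) ≤ (P.map fun p => ((p.1:ℝ) + p.2)).sum := by
          rw [← cast_degsum]; exact_mod_cast hdeg
        rw [htot]; linarith
      · -- card = 2, degree sum = 4, and some i ≥ 1
        have hdeg : 4 ≤ (P.map fun p => p.1 + p.2).sum := by omega
        obtain ⟨⟨p, hp, hp1⟩, -⟩ := hperm hc
        have hi1 : 1 ≤ (P.map fun p => p.1).sum := by
          have := Multiset.single_le_sum (fun x _ => Nat.zero_le x) p.1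
            (Multiset.mem_map_of_mem (fun q : ℕ × ℕ => q.1) hp)
          omega
        have hA : (4:ℝ) ≤ (P.map fun p => ((p.1:ℝ) + p.2)).sum := by
          rw [← cast_degsum]; exact_mod_cast hdeg
        have hB : (1:ℝ) ≤ (P.map fun p => ((p.1:ℝ))).sum := by
          rw [← cast_isum]; exact_mod_cast hi1
        rw [htot]; linarith
  refine ⟨h1, h2, by rw [h1, h2]; norm_num⟩
end

section
/- Let Ω := {(x,y) ∈ ℝ² : x ≥ 0, y ≥ 0, x/2 + y ≤ 1} (the moment image of the ellipsoid E(2,1), so that ‖(i,j)‖_Ω^* = max(2i, j) for integers i,j ≥ 0). Then for all positive integers k and ℓ: (1) if k > 4(ℓ − 1), then G_k^ℓ(Ω) = 2(ℓ − 1) + min{max(2i, j) : i, j ∈ ℤ_{≥0}, i + j = k − 4(ℓ−1)}; (2) G_k^ℓ(Ω) = k for k ∈ {1, 2}; and (3) if k = 2 + 2i ≤ 2(ℓ − 1) or k = 3 + 2i ≤ 2(ℓ − 1) for some integer i ≥ 0, then G_k^ℓ(Ω) = 2 + i. -/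
open scoped BigOperators

/-- Auxiliary: the natural-number cost of a multiset of pairs for the triangle
`{x/2 + y ≤ 1}`, whose dual norm is `max (2i) j`. -/
def mcost (P : Multiset (ℕ × ℕ)) : ℕ := (P.map (fun p => max (2 * p.1) p.2)).sum

lemma pairNorm_tri (Ω : Set (ℝ × ℝ))
    (hΩ : Ω = {p : ℝ × ℝ | 0 ≤ p.1 ∧ 0 ≤ p.2 ∧ p.1 / 2 + p.2 ≤ 1}) (p : ℕ × ℕ) :
    pairNorm Ω p = ((max (2 * p.1) p.2 : ℕ) : ℝ) := by
  subst hΩ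
  apply IsGreatest.csSup_eq
  constructor
  · rcases le_total p.2 (2 * p.1) with h | h
    · refine ⟨(2, 0), by norm_num, ?_⟩
      push_cast [max_eq_left h]
      ring
    · refine ⟨(0, 1), by norm_num, ?_⟩
      push_cast [max_eq_right h]
      ring
  · rintro x ⟨w, hw, rfl⟩
    simp only [Set.mem_setOf_eq] at hw
    obtain ⟨hw1, hw2, hw3⟩ := hw
    set m : ℝ := ((max (2 * p.1) p.2 : ℕ) : ℝ) with hm
    have hm1 : (2 * (p.1:ℝ)) ≤ m := by
      rw [hm]; exact_mod_cast le_max_left (2 * p.1) p.2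
    have hm2 : ((p.2:ℝ)) ≤ m := by
      rw [hm]; exact_mod_cast le_max_right (2 * p.1) p.2
    have hm0 : (0:ℝ) ≤ m := le_trans (by positivity) hm1
    dsimp only
    nlinarith [mul_nonneg hm0 (by linarith : (0:ℝ) ≤ 1 - w.1/2 - w.2),
      mul_nonneg (by linarith : (0:ℝ) ≤ m/2 - (p.1:ℝ)) hw1,
      mul_nonneg (by linarith : (0:ℝ) ≤ m - (p.2:ℝ)) hw2]

lemma totalNorm_tri (Ω : Set (ℝ × ℝ))
    (hΩ : Ω = {p : ℝ × ℝ | 0 ≤ p.1 ∧ 0 ≤ p.2 ∧ p.1 / 2 + p.2 ≤ 1})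
    (P : Multiset (ℕ × ℕ)) : totalNorm Ω P = (mcost P : ℝ) := by
  unfold totalNorm mcost
  have h : pairNorm Ω = fun p : ℕ × ℕ => ((max (2 * p.1) p.2 : ℕ) : ℝ) :=
    funext (pairNorm_tri Ω hΩ)
  rw [h, Nat.cast_multiset_sum, Multiset.map_map]
  rfl

lemma mcost_lb (P : Multiset (ℕ × ℕ)) (h : ∀ p ∈ P, p ≠ (0, 0)) :
    (P.map (fun p => p.1 + p.2)).sum + Multiset.card P ≤ 2 * mcost P ∧
    2 * (P.map (fun p => p.1 + p.2)).sum ≤ 3 * mcost P := by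
  induction P using Multiset.induction with
  | empty => simp [mcost]
  | cons a s ih =>
    have ha : ¬(a.1 = 0 ∧ a.2 = 0) := by
      intro h0
      exact h a (Multiset.mem_cons_self a s) (Prod.ext h0.1 h0.2)
    have ih' := ih (fun p hp => h p (Multiset.mem_cons_of_mem hp))
    have key : a.1 + a.2 + 1 ≤ 2 * max (2 * a.1) a.2 ∧
        2 * (a.1 + a.2) ≤ 3 * max (2 * a.1) a.2 := by
      rcases le_total (2 * a.1) a.2 with h' | h'
      · rw [max_eq_right h']; omega
      · rw [max_eq_left h']; omega
    simp only [mcost, Multiset.map_cons, Multiset.sum_cons, Multiset.card_cons] at *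
    omega

lemma Gcap_eq_of (Ω : Set (ℝ × ℝ))
    (hΩ : Ω = {p : ℝ × ℝ | 0 ≤ p.1 ∧ 0 ≤ p.2 ∧ p.1 / 2 + p.2 ≤ 1})
    (k : ℕ) (ℓ : ℕ∞) (v : ℕ) (P : Multiset (ℕ × ℕ)) (hP : Admissible k ℓ P)
    (hc : mcost P = v) (hlb : ∀ Q, Admissible k ℓ Q → v ≤ mcost Q) :
    Gcap Ω k ℓ = (v : ℝ) := by
  apply IsLeast.csInf_eq
  constructor
  · exact ⟨P, hP, by rw [totalNorm_tri Ω hΩ, hc]⟩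
  · rintro x ⟨Q, hQ, rfl⟩
    rw [totalNorm_tri Ω hΩ]
    exact_mod_cast hlb Q hQ

/-- partial computation of `G_k^ℓ` for the moment image
`{x/2 + y ≤ 1}` of the ellipsoid `E(2,1)`. Here `min{max(2i,j) : i+j = r}` is the
`r`-th smallest entry of the nondecreasing sequence of positive multiples of 2 and 1. -/

theorem stmt_19 (Ω : Set (ℝ × ℝ))
    (hΩ : Ω = {p : ℝ × ℝ | 0 ≤ p.1 ∧ 0 ≤ p.2 ∧ p.1 / 2 + p.2 ≤ 1})
    (k ℓ : ℕ) (hk : 1 ≤ k) (hℓ : 1 ≤ ℓ) :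
    (4 * (ℓ - 1) < k →
      Gcap Ω k (ℓ : ℕ∞) = 2 * ((ℓ : ℝ) - 1) +
        ((sInf {m : ℕ | ∃ i j : ℕ, i + j = k - 4 * (ℓ - 1) ∧ m = max (2 * i) j}
          : ℕ) : ℝ)) ∧
    (k = 1 → Gcap Ω k (ℓ : ℕ∞) = 1) ∧
    (k = 2 → Gcap Ω k (ℓ : ℕ∞) = 2) ∧
    (∀ i : ℕ, k = 2 + 2 * i → k ≤ 2 * (ℓ - 1) → Gcap Ω k (ℓ : ℕ∞) = 2 + i) ∧
    (∀ i : ℕ, k = 3 + 2 * i → k ≤ 2 * (ℓ - 1) → Gcap Ω k (ℓ : ℕ∞) = 2 + i) := by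
  have hpart : ∀ v : ℕ, ∀ P : Multiset (ℕ × ℕ), Admissible k (ℓ : ℕ∞) P →
      mcost P = v → (∀ Q, Admissible k (ℓ : ℕ∞) Q → v ≤ mcost Q) →
      Gcap Ω k (ℓ : ℕ∞) = (v : ℝ) := fun v P h1 h2 h3 => Gcap_eq_of Ω hΩ k _ v P h1 h2 h3
  have hcard_le : ∀ n : ℕ, n ≤ ℓ → ((n : ℕ) : ℕ∞) ≤ (ℓ : ℕ∞) := fun n hn => Nat.cast_le.mpr hn
  have hrepmem : ∀ (n : ℕ) (a p : ℕ × ℕ), p ∈ Multiset.replicate n a → p = a :=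
    fun n a p hp => (Multiset.eq_of_mem_replicate hp)
  refine ⟨?_, ?_, ?_, ?_, ?_⟩
  · -- case k > 4(ℓ-1)
    intro h4
    have hr1 : 1 ≤ k - 4 * (ℓ - 1) := by omega
    set r := k - 4 * (ℓ - 1) with hrdef
    set s : Set ℕ := {m : ℕ | ∃ i j : ℕ, i + j = k - 4 * (ℓ - 1) ∧ m = max (2 * i) j}
      with hsdef
    have hne : s.Nonempty := ⟨max (2 * r) 0, r, 0, by omega, rfl⟩
    obtain ⟨i₀, j₀, hij, hMdef⟩ := Nat.sInf_mem hne
    set M := sInf s with hMs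
    have hMle : M ≤ (2 * r + 2) / 3 := by
      apply Nat.sInf_le
      refine ⟨r - (2 * r + 2) / 3, (2 * r + 2) / 3, by omega, ?_⟩
      have h2 : 2 * (r - (2 * r + 2) / 3) ≤ (2 * r + 2) / 3 := by omega
      exact (max_eq_right h2).symm
    set P : Multiset (ℕ × ℕ) := Multiset.replicate (ℓ - 1) (1, 2) + {(i₀, j₀)} with hPdef
    have hcardP : Multiset.card P = ℓ := by
      simp [hPdef]; omega
    have hadm : Admissible k (ℓ : ℕ∞) P := by
      refine ⟨?_, ?_, ?_, ?_⟩
      · intro p hp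
        rw [hPdef, Multiset.mem_add] at hp
        rcases hp with hp | hp
        · rw [hrepmem _ _ _ hp]; decide
        · rw [Multiset.mem_singleton] at hp
          subst hp
          simp only [ne_eq, Prod.mk.injEq, not_and]
          omega
      · simp only [hPdef, Multiset.map_add, Multiset.sum_add, Multiset.map_replicate,
          Multiset.sum_replicate, Multiset.map_singleton, Multiset.sum_singleton,
          Multiset.card_add, Multiset.card_replicate, Multiset.card_singleton,
          smul_eq_mul]
        omega
      · intro h2
        rw [hcardP] at h2
        have hmem : ((1:ℕ), (2:ℕ)) ∈ P := by
          rw [hPdef, Multiset.mem_add]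
          exact Or.inl (Multiset.mem_replicate.mpr ⟨by omega, rfl⟩)
        exact ⟨⟨(1, 2), hmem, by norm_num⟩, ⟨(1, 2), hmem, by norm_num⟩⟩
      · rw [hcardP]
    have hcost : mcost P = 2 * (ℓ - 1) + M := by
      rw [hMdef]
      simp only [hPdef, mcost, Multiset.map_add, Multiset.sum_add, Multiset.map_replicate,
        Multiset.sum_replicate, Multiset.map_singleton, Multiset.sum_singleton, smul_eq_mul]
      norm_num
      omega
    have hlb : ∀ Q, Admissible k (ℓ : ℕ∞) Q → 2 * (ℓ - 1) + M ≤ mcost Q := by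
      rintro Q ⟨hQ0, hQidx, _, hQcard⟩
      have hq : Multiset.card Q ≤ ℓ := Nat.cast_le.mp hQcard
      have hlbQ := (mcost_lb Q hQ0).2
      omega
    have := hpart (2 * (ℓ - 1) + M) P hadm hcost hlb
    rw [this]
    rw [Nat.cast_add, Nat.cast_mul, Nat.cast_sub hℓ]
    norm_num
  · -- k = 1
    intro hk1
    subst hk1
    have := hpart 1 {(0, 1)} ⟨?_, ?_, ?_, ?_⟩ ?_ ?_
    · rw [this]; norm_num
    · intro p hp; rw [Multiset.mem_singleton] at hp; subst hp; decide
    · simp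
    · intro h2; simp at h2
    · simpa using hcard_le 1 hℓ
    · simp [mcost]
    · rintro Q ⟨hQ0, hQidx, _, _⟩
      have := (mcost_lb Q hQ0).1
      omega
  · -- k = 2
    intro hk2
    subst hk2
    have := hpart 2 {(1, 1)} ⟨?_, ?_, ?_, ?_⟩ ?_ ?_
    · rw [this]; norm_num
    · intro p hp; rw [Multiset.mem_singleton] at hp; subst hp; decide
    · simp
    · intro h2; simp at h2
    · simpa using hcard_le 1 hℓ
    · simp [mcost]
    · rintro Q ⟨hQ0, hQidx, _, _⟩
      have := (mcost_lb Q hQ0).1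
      omega
  · -- k = 2 + 2i
    intro i hki hkl
    set P : Multiset (ℕ × ℕ) := (1, 1) ::ₘ Multiset.replicate i (0, 1) with hPdef
    have hadm : Admissible k (ℓ : ℕ∞) P := by
      refine ⟨?_, ?_, ?_, ?_⟩
      · intro p hp
        rw [hPdef, Multiset.mem_cons] at hp
        rcases hp with hp | hp
        · subst hp; decide
        · rw [hrepmem _ _ _ hp]; decide
      · simp only [hPdef, Multiset.map_cons, Multiset.sum_cons, Multiset.map_replicate,
          Multiset.sum_replicate, Multiset.card_cons, Multiset.card_replicate, smul_eq_mul]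
        omega
      · intro _
        exact ⟨⟨(1, 1), Multiset.mem_cons_self _ _, by norm_num⟩,
          ⟨(1, 1), Multiset.mem_cons_self _ _, by norm_num⟩⟩
      · have : Multiset.card P = i + 1 := by simp [hPdef]
        rw [this]
        exact hcard_le (i + 1) (by omega)
    have hcost : mcost P = 2 + i := by
      simp only [hPdef, mcost, Multiset.map_cons, Multiset.sum_cons, Multiset.map_replicate,
        Multiset.sum_replicate, smul_eq_mul]
      norm_num
    have hlb : ∀ Q, Admissible k (ℓ : ℕ∞) Q → 2 + i ≤ mcost Q := by
      rintro Q ⟨hQ0, hQidx, _, _⟩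
      have := (mcost_lb Q hQ0).1
      omega
    have := hpart (2 + i) P hadm hcost hlb
    rw [this]
    push_cast
    ring
  · -- k = 3 + 2i
    intro i hki hkl
    set P : Multiset (ℕ × ℕ) := (1, 2) ::ₘ Multiset.replicate i (0, 1) with hPdef
    have hadm : Admissible k (ℓ : ℕ∞) P := by
      refine ⟨?_, ?_, ?_, ?_⟩
      · intro p hp
        rw [hPdef, Multiset.mem_cons] at hp
        rcases hp with hp | hp
        · subst hp; decide
        · rw [hrepmem _ _ _ hp]; decide
      · simp only [hPdef, Multiset.map_cons, Multiset.sum_cons, Multiset.map_replicate,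
          Multiset.sum_replicate, Multiset.card_cons, Multiset.card_replicate, smul_eq_mul]
        omega
      · intro _
        exact ⟨⟨(1, 2), Multiset.mem_cons_self _ _, by norm_num⟩,
          ⟨(1, 2), Multiset.mem_cons_self _ _, by norm_num⟩⟩
      · have : Multiset.card P = i + 1 := by simp [hPdef]
        rw [this]
        exact hcard_le (i + 1) (by omega)
    have hcost : mcost P = 2 + i := by
      simp only [hPdef, mcost, Multiset.map_cons, Multiset.sum_cons, Multiset.map_replicate,
        Multiset.sum_replicate, smul_eq_mul]
      norm_num
    have hlb : ∀ Q, Admissible k (ℓ : ℕ∞) Q → 2 + i ≤ mcost Q := by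
      rintro Q ⟨hQ0, hQidx, _, _⟩
      have := (mcost_lb Q hQ0).1
      omega
    have := hpart (2 + i) P hadm hcost hlb
    rw [this]
    push_cast
    ring
end
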